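/- arXiv:1912.07146 — 9 statements merged into one kernel-verified Lean document; each statement's English description precedes it below -/
import Mathlib

section
/- Let f : ℝ^d → ℝ be ρ-weakly convex and continuous, fix μ ∈ (0, ρ⁻¹), and let f_μ be the Moreau envelope of f with prox_{μf}(x) the unique minimizer defining it. Then for all x, x' ∈ ℝ^d the two-sided quadratic bound holds: −(ρ/(2(1 − μρ)))‖x' − x‖² ≤ f_μ(x') − f_μ(x) − ⟨μ⁻¹(x − prox_{μf}(x)), x' − x⟩ ≤ (1/(2μ))‖x' − x‖². -/
open Set Filter Topology
open scoped RealInnerProductSpace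
set_option linter.unusedSectionVars false
set_option maxHeartbeats 1000000

variable {E : Type*} [NormedAddCommGroup E] [InnerProductSpace ℝ E]

private lemma aux_bdd (f : E → ℝ) (μ : ℝ) (prox : E → E)
    (hprox : ∀ z y, f (prox z) + 1 / (2 * μ) * ‖prox z - z‖ ^ 2 ≤
      f y + 1 / (2 * μ) * ‖y - z‖ ^ 2) (z : E) :
    BddBelow (Set.range fun y => f y + 1 / (2 * μ) * ‖y - z‖ ^ 2) :=
  ⟨f (prox z) + 1 / (2 * μ) * ‖prox z - z‖ ^ 2, by
    rintro _ ⟨y, rfl⟩; exact hprox z y⟩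

private lemma aux_env_eq (f : E → ℝ) (μ : ℝ) (prox : E → E)
    (hprox : ∀ z y, f (prox z) + 1 / (2 * μ) * ‖prox z - z‖ ^ 2 ≤
      f y + 1 / (2 * μ) * ‖y - z‖ ^ 2) (z : E) :
    (⨅ y : E, f y + 1 / (2 * μ) * ‖y - z‖ ^ 2)
      = f (prox z) + 1 / (2 * μ) * ‖prox z - z‖ ^ 2 :=
  le_antisymm (ciInf_le (aux_bdd f μ prox hprox z) _) (le_ciInf (hprox z))

private lemma aux_normsq_cvx (v w : E) (a b : ℝ) (ha : 0 ≤ a) (hb : 0 ≤ b) (hab : a + b = 1) :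
    ‖a • v + b • w‖ ^ 2 ≤ a * ‖v‖ ^ 2 + b * ‖w‖ ^ 2 := by
  have h := norm_add_le (a • v) (b • w)
  rw [norm_smul, norm_smul, Real.norm_eq_abs, Real.norm_eq_abs,
    abs_of_nonneg ha, abs_of_nonneg hb] at h
  nlinarith [norm_nonneg (a • v + b • w), norm_nonneg v, norm_nonneg w,
    sq_nonneg (‖v‖ - ‖w‖), mul_nonneg ha hb]

private lemma aux_keyQ (ρ μ : ℝ) (hμ0 : 0 < μ) (hα : 0 < 1 - μ * ρ) (y u : E) :
    1 / (2 * μ) * ‖y - u‖ ^ 2 + (ρ / (1 - μ * ρ)) / 2 * ‖u‖ ^ 2 - ρ / 2 * ‖y‖ ^ 2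
      = 1 / (2 * μ * (1 - μ * ρ)) * ‖(1 - μ * ρ) • y - u‖ ^ 2 := by
  have h1 : ‖y - u‖ ^ 2 = ‖y‖ ^ 2 - 2 * ⟪y, u⟫ + ‖u‖ ^ 2 := norm_sub_sq_real y u
  have h2 : ‖(1 - μ * ρ) • y - u‖ ^ 2
      = (1 - μ * ρ) ^ 2 * ‖y‖ ^ 2 - 2 * ((1 - μ * ρ) * ⟪y, u⟫) + ‖u‖ ^ 2 := by
    rw [norm_sub_sq_real, real_inner_smul_left, norm_smul, Real.norm_eq_abs,
      abs_of_pos hα, mul_pow]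
  rw [h1, h2]
  field_simp
  ring

private lemma aux_upper (f : E → ℝ) (μ : ℝ) (hμ0 : 0 < μ) (prox : E → E)
    (hprox : ∀ z y, f (prox z) + 1 / (2 * μ) * ‖prox z - z‖ ^ 2 ≤
      f y + 1 / (2 * μ) * ‖y - z‖ ^ 2) (u v : E) :
    (⨅ y : E, f y + 1 / (2 * μ) * ‖y - v‖ ^ 2)
      ≤ (⨅ y : E, f y + 1 / (2 * μ) * ‖y - u‖ ^ 2)
        + ⟪μ⁻¹ • (u - prox u), v - u⟫ + 1 / (2 * μ) * ‖v - u‖ ^ 2 := by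
  rw [aux_env_eq f μ prox hprox u]
  have h1 : (⨅ y : E, f y + 1 / (2 * μ) * ‖y - v‖ ^ 2)
      ≤ f (prox u) + 1 / (2 * μ) * ‖prox u - v‖ ^ 2 :=
    ciInf_le (aux_bdd f μ prox hprox v) _
  have h2 : prox u - v = (prox u - u) - (v - u) := by abel
  have h3 : ‖prox u - v‖ ^ 2
      = ‖prox u - u‖ ^ 2 - 2 * ⟪prox u - u, v - u⟫ + ‖v - u‖ ^ 2 := by
    rw [h2, norm_sub_sq_real]
  have h4 : ⟪μ⁻¹ • (u - prox u), v - u⟫ = μ⁻¹ * (- ⟪prox u - u, v - u⟫) := by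
    rw [real_inner_smul_left, ← neg_sub (prox u) u, inner_neg_left]
  rw [h4] at *
  have hμ' : μ ≠ 0 := ne_of_gt hμ0
  calc (⨅ y : E, f y + 1 / (2 * μ) * ‖y - v‖ ^ 2)
      ≤ f (prox u) + 1 / (2 * μ) * ‖prox u - v‖ ^ 2 := h1
    _ = f (prox u) + 1 / (2 * μ) * ‖prox u - u‖ ^ 2
        + μ⁻¹ * (- ⟪prox u - u, v - u⟫) + 1 / (2 * μ) * ‖v - u‖ ^ 2 := by
        rw [h3]; field_simp; ring

private lemma aux_H_convex (f : E → ℝ) (ρ μ : ℝ) (hμ0 : 0 < μ) (hα : 0 < 1 - μ * ρ)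
    (hwc : ConvexOn ℝ Set.univ (fun z => f z + ρ / 2 * ‖z‖ ^ 2)) (prox : E → E)
    (hprox : ∀ z y, f (prox z) + 1 / (2 * μ) * ‖prox z - z‖ ^ 2 ≤
      f y + 1 / (2 * μ) * ‖y - z‖ ^ 2) :
    ConvexOn ℝ Set.univ (fun u =>
      (⨅ y : E, f y + 1 / (2 * μ) * ‖y - u‖ ^ 2) + (ρ / (1 - μ * ρ)) / 2 * ‖u‖ ^ 2) := by
  refine ⟨convex_univ, ?_⟩
  intro u1 _ u2 _ a b ha hb hab
  simp only []
  set p1 := prox u1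
  set p2 := prox u2
  have hpos : (0:ℝ) < 1 / (2 * μ * (1 - μ * ρ)) := by positivity
  have h1 : (⨅ y : E, f y + 1 / (2 * μ) * ‖y - (a • u1 + b • u2)‖ ^ 2)
      ≤ f (a • p1 + b • p2) + 1 / (2 * μ) * ‖(a • p1 + b • p2) - (a • u1 + b • u2)‖ ^ 2 :=
    ciInf_le (aux_bdd f μ prox hprox _) _
  have hg : f (a • p1 + b • p2) + ρ / 2 * ‖a • p1 + b • p2‖ ^ 2
      ≤ a * (f p1 + ρ / 2 * ‖p1‖ ^ 2) + b * (f p2 + ρ / 2 * ‖p2‖ ^ 2) :=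
    hwc.2 (mem_univ p1) (mem_univ p2) ha hb hab
  have hvec : (1 - μ * ρ) • (a • p1 + b • p2) - (a • u1 + b • u2)
      = a • ((1 - μ * ρ) • p1 - u1) + b • ((1 - μ * ρ) • p2 - u2) := by
    module
  have hq : ‖(1 - μ * ρ) • (a • p1 + b • p2) - (a • u1 + b • u2)‖ ^ 2
      ≤ a * ‖(1 - μ * ρ) • p1 - u1‖ ^ 2 + b * ‖(1 - μ * ρ) • p2 - u2‖ ^ 2 := by
    rw [hvec]; exact aux_normsq_cvx _ _ a b ha hb hab
  have hk1 := aux_keyQ ρ μ hμ0 hα (a • p1 + b • p2) (a • u1 + b • u2)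
  have hk2 := aux_keyQ ρ μ hμ0 hα p1 u1
  have hk3 := aux_keyQ ρ μ hμ0 hα p2 u2
  rw [aux_env_eq f μ prox hprox u1, aux_env_eq f μ prox hprox u2]
  have hqq := mul_le_mul_of_nonneg_left hq hpos.le
  have hk2' := congrArg (fun r => a * r) hk2
  have hk3' := congrArg (fun r => b * r) hk3
  simp only [smul_eq_mul] at hk2' hk3' ⊢
  nlinarith [hg, h1, hqq, hk1, hk2', hk3']


private lemma aux_limit (A C : ℝ) (hC : 0 ≤ C)
    (h : ∀ t : ℝ, 0 < t → t ≤ 1 → -(C * t) ≤ A) : 0 ≤ A := by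
  by_contra hA
  push_neg at hA
  rcases eq_or_lt_of_le hC with hC0 | hC0
  · have := h 1 one_pos le_rfl
    rw [← hC0] at this; linarith
  · have hd : 0 < -A / (2 * C) := div_pos (by linarith) (by linarith)
    have htpos : 0 < min 1 (-A / (2 * C)) := lt_min one_pos hd
    have ht := h _ htpos (min_le_left _ _)
    have hmin : min 1 (-A / (2 * C)) ≤ -A / (2 * C) := min_le_right _ _
    have h2 : C * min 1 (-A / (2 * C)) ≤ C * (-A / (2 * C)) :=
      mul_le_mul_of_nonneg_left hmin hC0.le
    have h3 : C * (-A / (2 * C)) = -A / 2 := by field_simp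
    linarith

/-- For a continuous `ρ`-weakly convex `f`, `μ ∈ (0, ρ⁻¹)`, and the proximal map
`prox` (assumed to minimize the proximal subproblem at each point), the Moreau envelope
`f_μ(u) = inf_y { f(y) + (1/(2μ))‖y − u‖² }` satisfies the two-sided quadratic bound
`−(ρ/(2(1 − μρ)))‖x' − x‖² ≤ f_μ(x') − f_μ(x) − ⟪μ⁻¹(x − prox x), x' − x⟫ ≤ (1/(2μ))‖x' − x‖²`. -/
theorem moreau_envelope_two_sided_bound {d : ℕ}
    (f : EuclideanSpace ℝ (Fin d) → ℝ) (ρ μ : ℝ) (hρ : 0 < ρ)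
    (hwc : ConvexOn ℝ Set.univ (fun z => f z + ρ / 2 * ‖z‖ ^ 2))
    (hf : Continuous f) (hμ : μ ∈ Set.Ioo 0 ρ⁻¹)
    (prox : EuclideanSpace ℝ (Fin d) → EuclideanSpace ℝ (Fin d))
    (hprox : ∀ z y, f (prox z) + 1 / (2 * μ) * ‖prox z - z‖ ^ 2 ≤
      f y + 1 / (2 * μ) * ‖y - z‖ ^ 2) :
    ∀ x x' : EuclideanSpace ℝ (Fin d),
      -(ρ / (2 * (1 - μ * ρ))) * ‖x' - x‖ ^ 2 ≤
        (⨅ y : EuclideanSpace ℝ (Fin d), (f y + 1 / (2 * μ) * ‖y - x'‖ ^ 2)) -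
        (⨅ y : EuclideanSpace ℝ (Fin d), (f y + 1 / (2 * μ) * ‖y - x‖ ^ 2)) -
        ⟪μ⁻¹ • (x - prox x), x' - x⟫ ∧
      (⨅ y : EuclideanSpace ℝ (Fin d), (f y + 1 / (2 * μ) * ‖y - x'‖ ^ 2)) -
        (⨅ y : EuclideanSpace ℝ (Fin d), (f y + 1 / (2 * μ) * ‖y - x‖ ^ 2)) -
        ⟪μ⁻¹ • (x - prox x), x' - x⟫ ≤ 1 / (2 * μ) * ‖x' - x‖ ^ 2 := by
  obtain ⟨hμ0, hμρ⟩ := hμ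
  have hα : 0 < 1 - μ * ρ := by
    have : μ * ρ < ρ⁻¹ * ρ := mul_lt_mul_of_pos_right hμρ hρ
    rw [inv_mul_cancel₀ hρ.ne'] at this
    linarith
  set c : ℝ := ρ / (1 - μ * ρ) with hc
  set env : EuclideanSpace ℝ (Fin d) → ℝ :=
    fun u => ⨅ y : EuclideanSpace ℝ (Fin d), f y + 1 / (2 * μ) * ‖y - u‖ ^ 2 with henv
  set H : EuclideanSpace ℝ (Fin d) → ℝ := fun u => env u + c / 2 * ‖u‖ ^ 2 with hH
  have hHconv : ConvexOn ℝ Set.univ H :=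
    aux_H_convex f ρ μ hμ0 hα hwc prox hprox
  intro x x'
  have hupper : env x' ≤ env x + ⟪μ⁻¹ • (x - prox x), x' - x⟫ + 1 / (2 * μ) * ‖x' - x‖ ^ 2 :=
    aux_upper f μ hμ0 prox hprox x x'
  constructor
  · -- lower bound
    have hcpos : 0 < c := div_pos hρ hα
    set k : ℝ := 1 / (2 * μ) + c / 2 with hk
    have hknn : 0 ≤ k * ‖x' - x‖ ^ 2 := by positivity
    have key : ∀ t : ℝ, 0 < t → t ≤ 1 →
        -((k * ‖x' - x‖ ^ 2) * t) ≤ H x' - H x - ⟪μ⁻¹ • (x - prox x), x' - x⟫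
          - c * ⟪x, x' - x⟫ := by
      intro t ht0 ht1
      have h1 : H (x + t • (x' - x)) ≤ (1 - t) * H x + t * H x' := by
        have h := hHconv.2 (Set.mem_univ x) (Set.mem_univ x')
          (show (0:ℝ) ≤ 1 - t by linarith) ht0.le (show (1 - t) + t = 1 by ring)
        simp only [smul_eq_mul] at h
        have hpt : (1 - t) • x + t • x' = x + t • (x' - x) := by module
        rwa [hpt] at h
      have h2 : H x ≤ (1/2) * H (x + t • (x' - x)) + (1/2) * H (x - t • (x' - x)) := by
        have h := hHconv.2 (Set.mem_univ (x + t • (x' - x))) (Set.mem_univ (x - t • (x' - x)))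
          (show (0:ℝ) ≤ 1/2 by norm_num) (show (0:ℝ) ≤ 1/2 by norm_num)
          (show (1/2 : ℝ) + 1/2 = 1 by norm_num)
        simp only [smul_eq_mul] at h
        have hpt : (1/2 : ℝ) • (x + t • (x' - x)) + (1/2 : ℝ) • (x - t • (x' - x)) = x := by
          module
        rwa [hpt] at h
      have hup : env (x - t • (x' - x)) ≤ env x
          + ⟪μ⁻¹ • (x - prox x), (x - t • (x' - x)) - x⟫
          + 1 / (2 * μ) * ‖(x - t • (x' - x)) - x‖ ^ 2 :=
        aux_upper f μ hμ0 prox hprox x (x - t • (x' - x))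
      have he1 : (x - t • (x' - x)) - x = -(t • (x' - x)) := by abel
      have he2 : ⟪μ⁻¹ • (x - prox x), (x - t • (x' - x)) - x⟫
          = -(t * ⟪μ⁻¹ • (x - prox x), x' - x⟫) := by
        rw [he1, inner_neg_right, real_inner_smul_right]
      have he3 : ‖(x - t • (x' - x)) - x‖ ^ 2 = t ^ 2 * ‖x' - x‖ ^ 2 := by
        rw [he1, norm_neg, norm_smul, Real.norm_eq_abs, abs_of_pos ht0, mul_pow]
      have he4 : ‖x - t • (x' - x)‖ ^ 2
          = ‖x‖ ^ 2 - 2 * (t * ⟪x, x' - x⟫) + t ^ 2 * ‖x' - x‖ ^ 2 := by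
        rw [norm_sub_sq_real, real_inner_smul_right, norm_smul, Real.norm_eq_abs,
          abs_of_pos ht0, mul_pow]
      rw [he2, he3] at hup
      have h3 : H (x - t • (x' - x)) ≤ H x
          - t * (⟪μ⁻¹ • (x - prox x), x' - x⟫ + c * ⟪x, x' - x⟫)
          + k * t ^ 2 * ‖x' - x‖ ^ 2 := by
        have hHa : H (x - t • (x' - x)) = env (x - t • (x' - x))
            + c / 2 * ‖x - t • (x' - x)‖ ^ 2 := rfl
        have hHb : H x = env x + c / 2 * ‖x‖ ^ 2 := rfl
        rw [hHa, hHb, he4, hk]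
        nlinarith [hup]
      have htA : -((k * ‖x' - x‖ ^ 2) * t ^ 2)
          ≤ t * (H x' - H x - ⟪μ⁻¹ • (x - prox x), x' - x⟫ - c * ⟪x, x' - x⟫) := by
        clear_value c env H k
        linarith [h1, h2, h3]
      nlinarith [htA, ht0, sq_nonneg t]
    have hA := aux_limit _ _ hknn key
    have hxx : ‖x'‖ ^ 2 = ‖x‖ ^ 2 + 2 * ⟪x, x' - x⟫ + ‖x' - x‖ ^ 2 := by
      have hxe : x' = x + (x' - x) := by abel
      calc ‖x'‖ ^ 2 = ‖x + (x' - x)‖ ^ 2 := by rw [← hxe]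
        _ = ‖x‖ ^ 2 + 2 * ⟪x, x' - x⟫ + ‖x' - x‖ ^ 2 := norm_add_sq_real x (x' - x)
    have hHx : H x' = env x' + c / 2 * ‖x'‖ ^ 2 := rfl
    have hHx' : H x = env x + c / 2 * ‖x‖ ^ 2 := rfl
    rw [hHx, hHx'] at hA
    have hgoal : -(c / 2) * ‖x' - x‖ ^ 2
        ≤ env x' - env x - ⟪μ⁻¹ • (x - prox x), x' - x⟫ := by nlinarith [hA, hxx]
    have hcoef : -(ρ / (2 * (1 - μ * ρ))) = -(c / 2) := by
      rw [hc]; field_simp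
    rw [hcoef]
    exact hgoal
  · linarith [hupper]
end

section
/- Let f : ℝ^d → ℝ be ρ-weakly convex and continuous, fix μ ∈ (0, ρ⁻¹), and let prox_{μf}(x) denote the unique minimizer of y ↦ f(y) + (1/(2μ))‖y − x‖². Then the map x ↦ prox_{μf}(x) is Lipschitz continuous with constant 1/(1 − μρ), and the map x ↦ μ⁻¹(x − prox_{μf}(x)) (the gradient of the Moreau envelope f_μ) is Lipschitz continuous with constant max{μ⁻¹, ρ/(1 − μρ)}. -/
set_option maxHeartbeats 1000000

open Set Filter Topology
open scoped RealInnerProductSpace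

section Aux
variable {E : Type*} [NormedAddCommGroup E] [InnerProductSpace ℝ E]

lemma combo_norm_sq (a b : E) (t : ℝ) :
    ‖(1 - t) • a + t • b‖ ^ 2
      = (1 - t) * ‖a‖ ^ 2 + t * ‖b‖ ^ 2 - t * (1 - t) * ‖a - b‖ ^ 2 := by
  have e : ∀ v : E, ‖v‖ ^ 2 = ⟪v, v⟫ := fun v => (real_inner_self_eq_norm_sq v).symm
  rw [e, e, e, e]
  simp only [inner_add_left, inner_add_right, inner_sub_left, inner_sub_right,
    real_inner_smul_left, real_inner_smul_right, real_inner_comm a b]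
  ring

end Aux

/-- For a continuous `ρ`-weakly convex `f` and `μ ∈ (0, ρ⁻¹)`, the proximal map
(the minimizer of the proximal subproblem) is Lipschitz with constant `1/(1 − μρ)`, and the
gradient map of the Moreau envelope `x ↦ μ⁻¹(x − prox x)` is Lipschitz with constant
`max{μ⁻¹, ρ/(1 − μρ)}`. -/
theorem prox_and_moreau_gradient_lipschitz {d : ℕ}
    (f : EuclideanSpace ℝ (Fin d) → ℝ) (ρ μ : ℝ) (hρ : 0 < ρ)
    (hwc : ConvexOn ℝ Set.univ (fun z => f z + ρ / 2 * ‖z‖ ^ 2))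
    (hf : Continuous f) (hμ : μ ∈ Set.Ioo 0 ρ⁻¹)
    (prox : EuclideanSpace ℝ (Fin d) → EuclideanSpace ℝ (Fin d))
    (hprox : ∀ z y, f (prox z) + 1 / (2 * μ) * ‖prox z - z‖ ^ 2 ≤
      f y + 1 / (2 * μ) * ‖y - z‖ ^ 2) :
    LipschitzWith (Real.toNNReal (1 / (1 - μ * ρ))) prox ∧
    LipschitzWith (Real.toNNReal (max μ⁻¹ (ρ / (1 - μ * ρ))))
      (fun x => μ⁻¹ • (x - prox x)) := by
  obtain ⟨hμ0, hμρ⟩ := hμ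
  have hc : 0 < 1 - μ * ρ := by
    have : μ * ρ < ρ⁻¹ * ρ := mul_lt_mul_of_pos_right hμρ hρ
    rw [inv_mul_cancel₀ hρ.ne'] at this
    linarith
  set c : ℝ := 1 - μ * ρ with hcdef
  have hα : 0 < 1 / μ - ρ := by
    rw [sub_pos, lt_div_iff₀ hμ0]
    linarith [hc]
  set α : ℝ := 1 / μ - ρ with hαdef
  -- strong minimality of prox
  have key : ∀ x q, f (prox x) + 1 / (2 * μ) * ‖prox x - x‖ ^ 2 + α / 2 * ‖q - prox x‖ ^ 2
      ≤ f q + 1 / (2 * μ) * ‖q - x‖ ^ 2 := by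
    intro x q
    set p := prox x with hp
    set A : ℝ := f q + 1 / (2 * μ) * ‖q - x‖ ^ 2 - (f p + 1 / (2 * μ) * ‖p - x‖ ^ 2) with hA
    have hA0 : 0 ≤ A := by have := hprox x q; simp only [hA]; linarith
    have hstep : ∀ t : ℝ, t ∈ Set.Ioo (0:ℝ) 1 → α / 2 * (1 - t) * ‖q - p‖ ^ 2 ≤ A := by
      intro t ht
      obtain ⟨ht0, ht1⟩ := ht
      set z : EuclideanSpace ℝ (Fin d) := (1 - t) • p + t • q with hz
      have hconv : f z + ρ / 2 * ‖z‖ ^ 2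
          ≤ (1 - t) * (f p + ρ / 2 * ‖p‖ ^ 2) + t * (f q + ρ / 2 * ‖q‖ ^ 2) := by
        have h := hwc.2 (Set.mem_univ p) (Set.mem_univ q)
          (by linarith : (0:ℝ) ≤ 1 - t) ht0.le (by ring)
        simp only [smul_eq_mul] at h
        rw [hz]
        exact h
      have h1 : ‖z‖ ^ 2 = (1 - t) * ‖p‖ ^ 2 + t * ‖q‖ ^ 2 - t * (1 - t) * ‖p - q‖ ^ 2 :=
        combo_norm_sq p q t
      have h2 : ‖z - x‖ ^ 2 = (1 - t) * ‖p - x‖ ^ 2 + t * ‖q - x‖ ^ 2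
          - t * (1 - t) * ‖p - q‖ ^ 2 := by
        have hzx : z - x = (1 - t) • (p - x) + t • (q - x) := by
          rw [hz]; module
        rw [hzx, combo_norm_sq, show (p - x) - (q - x) = p - q by abel]
      have hmin := hprox x z
      rw [← hp] at hmin
      have hqp : ‖q - p‖ = ‖p - q‖ := norm_sub_rev q p
      have e1 : ρ / 2 * ‖z‖ ^ 2
          = ρ / 2 * ((1 - t) * ‖p‖ ^ 2 + t * ‖q‖ ^ 2 - t * (1 - t) * ‖p - q‖ ^ 2) := by
        rw [h1]
      have e2 : 1 / (2 * μ) * ‖z - x‖ ^ 2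
          = 1 / (2 * μ) * ((1 - t) * ‖p - x‖ ^ 2 + t * ‖q - x‖ ^ 2
            - t * (1 - t) * ‖p - q‖ ^ 2) := by
        rw [h2]
      have hineq : f p + 1 / (2 * μ) * ‖p - x‖ ^ 2
          ≤ (1 - t) * f p + t * f q + ρ / 2 * (t * (1 - t) * ‖p - q‖ ^ 2)
            + 1 / (2 * μ) * ((1 - t) * ‖p - x‖ ^ 2 + t * ‖q - x‖ ^ 2
              - t * (1 - t) * ‖p - q‖ ^ 2) := by
        nlinarith [hmin, hconv, e1, e2]
      have hcomb : t * (α / 2 * (1 - t) * ‖p - q‖ ^ 2) ≤ t * A := by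
        rw [hαdef, hA]
        have hμne : μ ≠ 0 := hμ0.ne'
        have hexp : 1 / μ - ρ = 2 * (1 / (2 * μ)) - ρ := by
          field_simp
        rw [hexp]
        nlinarith [hineq]
      have := le_of_mul_le_mul_left hcomb ht0
      rw [hqp]; linarith [this]
    -- take t → 0
    have hgoal : α / 2 * ‖q - p‖ ^ 2 ≤ A := by
      by_contra hcon
      push_neg at hcon
      set B : ℝ := α / 2 * ‖q - p‖ ^ 2 with hB
      have hB0 : 0 < B := lt_of_le_of_lt hA0 hcon
      set t : ℝ := (B - A) / (2 * B) with htdef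
      have ht : t ∈ Set.Ioo (0:ℝ) 1 := by
        constructor
        · apply div_pos (by linarith) (by linarith)
        · rw [div_lt_one (by linarith)]; linarith
      have htB : t * B = (B - A) / 2 := by
        rw [htdef]; field_simp
      have := hstep t ht
      have hexp : α / 2 * (1 - t) * ‖q - p‖ ^ 2 = B - t * B := by
        rw [hB]; ring
      rw [hexp, htB] at this
      clear_value B t A
      have hBA : B ≤ A := by linarith only [this]
      exact absurd hcon (not_lt.mpr hBA)
    linarith [hgoal]
  -- monotonicity inequality
  have mono : ∀ x y, c * ‖prox x - prox y‖ ^ 2 ≤ ⟪x - y, prox x - prox y⟫ := by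
    intro x y
    set p := prox x
    set q := prox y
    have k1 := key x q
    have k2 := key y p
    have hqp : ‖q - p‖ = ‖p - q‖ := norm_sub_rev q p
    rw [hqp] at k1
    have hD : ‖q - x‖ ^ 2 + ‖p - y‖ ^ 2 - ‖p - x‖ ^ 2 - ‖q - y‖ ^ 2
        = 2 * ⟪x - y, p - q⟫ := by
      simp only [norm_sub_sq_real, inner_sub_left, inner_sub_right]
      ring_nf
      rw [real_inner_comm p x, real_inner_comm q x, real_inner_comm p y, real_inner_comm q y]
      ring
    have hsum : α * ‖p - q‖ ^ 2
        ≤ 1 / (2 * μ) * (‖q - x‖ ^ 2 + ‖p - y‖ ^ 2 - ‖p - x‖ ^ 2 - ‖q - y‖ ^ 2) := by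
      linarith [k1, k2]
    rw [hD] at hsum
    have hμne : μ ≠ 0 := hμ0.ne'
    have h1 : μ * (α * ‖p - q‖ ^ 2) ≤ μ * (1 / (2 * μ) * (2 * ⟪x - y, p - q⟫)) :=
      mul_le_mul_of_nonneg_left hsum hμ0.le
    have h2 : μ * (1 / (2 * μ) * (2 * ⟪x - y, p - q⟫)) = ⟪x - y, p - q⟫ := by
      field_simp
    have h3 : μ * α = c := by
      rw [hαdef, hcdef]; field_simp
    calc c * ‖p - q‖ ^ 2 = μ * (α * ‖p - q‖ ^ 2) := by rw [← h3]; ring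
    _ ≤ ⟪x - y, p - q⟫ := by rw [h2] at h1; exact h1
  -- Lipschitz bound for prox
  have proxlip : ∀ x y, ‖prox x - prox y‖ ≤ 1 / c * ‖x - y‖ := by
    intro x y
    set s := ‖prox x - prox y‖ with hs
    have hs0 : 0 ≤ s := norm_nonneg _
    rcases eq_or_lt_of_le hs0 with h | h
    · rw [← h]; positivity
    · have h1 := mono x y
      have h2 : ⟪x - y, prox x - prox y⟫ ≤ ‖x - y‖ * s := by
        rw [hs]; exact real_inner_le_norm _ _
      rw [← hs] at h1
      have h3 : (c * s) * s ≤ ‖x - y‖ * s := by nlinarith [h1, h2]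
      have h4 : c * s ≤ ‖x - y‖ := le_of_mul_le_mul_right h3 h
      calc s = 1 / c * (c * s) := by field_simp
      _ ≤ 1 / c * ‖x - y‖ := by
          apply mul_le_mul_of_nonneg_left h4 (by positivity)
  have proxlipW : LipschitzWith (Real.toNNReal (1 / (1 - μ * ρ))) prox := by
    apply LipschitzWith.of_dist_le_mul
    intro x y
    rw [dist_eq_norm, dist_eq_norm, Real.coe_toNNReal _ (by positivity)]
    exact proxlip x y
  refine ⟨proxlipW, ?_⟩
  apply LipschitzWith.of_dist_le_mul
  intro x y
  rw [dist_eq_norm, dist_eq_norm, Real.coe_toNNReal _ (by positivity)]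
  have hI := mono x y
  have hsr0 := proxlip x y
  set p := prox x
  set q := prox y
  set r := ‖x - y‖ with hr
  set s := ‖p - q‖ with hs
  have hr0 : 0 ≤ r := norm_nonneg _
  have hs0 : 0 ≤ s := norm_nonneg _
  have hsr : s ≤ 1 / c * r := hsr0
  have hw : μ⁻¹ • (x - p) - μ⁻¹ • (y - q) = μ⁻¹ • ((x - y) - (p - q)) := by
    rw [← smul_sub]; congr 1; abel
  have hwn : ‖μ⁻¹ • (x - p) - μ⁻¹ • (y - q)‖ = μ⁻¹ * ‖(x - y) - (p - q)‖ := by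
    rw [hw, norm_smul, Real.norm_eq_abs, abs_of_pos (by positivity)]
  have hwsq : ‖(x - y) - (p - q)‖ ^ 2 = r ^ 2 - 2 * ⟪x - y, p - q⟫ + s ^ 2 :=
    norm_sub_sq_real _ _
  have hsq_le : ∀ a b : ℝ, 0 ≤ b → a ^ 2 ≤ b ^ 2 → a ≤ b := by
    intro a b hb hab
    nlinarith [abs_nonneg a, sq_abs a, le_abs_self a]
  rw [hwn]
  rcases le_or_gt (1/2 : ℝ) c with hcase | hcase
  · -- c ≥ 1/2 : bound by μ⁻¹ * r
    have hb : ‖(x - y) - (p - q)‖ ≤ r := by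
      apply hsq_le _ _ hr0
      nlinarith [hI, hwsq]
    calc μ⁻¹ * ‖(x - y) - (p - q)‖ ≤ μ⁻¹ * r := by
          apply mul_le_mul_of_nonneg_left hb (by positivity)
    _ ≤ max μ⁻¹ (ρ / (1 - μ * ρ)) * r := by
          apply mul_le_mul_of_nonneg_right (le_max_left _ _) hr0
  · -- c < 1/2 : bound by (ρ/c) * r
    have hb : ‖(x - y) - (p - q)‖ ≤ μ * ρ / c * r := by
      apply hsq_le _ _ (by positivity)
      have hs2 : s ^ 2 ≤ (1 / c * r) ^ 2 := by nlinarith [hsr, hs0]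
      have hmr : μ * ρ = 1 - c := by rw [hcdef]; ring
      have h12 : 0 < 1 - 2 * c := by linarith
      calc ‖(x - y) - (p - q)‖ ^ 2 ≤ r ^ 2 + (1 - 2 * c) * s ^ 2 := by
            nlinarith [hI, hwsq]
      _ ≤ r ^ 2 + (1 - 2 * c) * (1 / c * r) ^ 2 := by nlinarith [hs2, h12]
      _ = (μ * ρ / c * r) ^ 2 := by
            rw [hmr]; field_simp; ring
    calc μ⁻¹ * ‖(x - y) - (p - q)‖ ≤ μ⁻¹ * (μ * ρ / c * r) := by
          apply mul_le_mul_of_nonneg_left hb (by positivity)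
    _ = ρ / c * r := by field_simp
    _ ≤ max μ⁻¹ (ρ / (1 - μ * ρ)) * r := by
          apply mul_le_mul_of_nonneg_right (le_max_right _ _) hr0
end

section
/- Let g : ℝ^d → ℝ be differentiable with β-Lipschitz gradient, let r : ℝ^d → ℝ be ρ-weakly convex and continuous, and fix μ ∈ (0, ρ⁻¹). Define the proximal gradient map S(x) = prox_{μr}(x − μ∇g(x)), where prox_{μr}(z) is the unique minimizer of y ↦ r(y) + (1/(2μ))‖y − z‖². Then the map x ↦ x − S(x) is Lipschitz continuous with constant μβ + (1 + μβ)·max{1, μρ/(1 − μρ)}. -/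
/-!
For `μρ < 1` the prox objective `y ↦ r y + ‖y - z‖² / (2μ)` is `(μ⁻¹ - ρ)`-strongly convex, so
it grows quadratically away from its minimizer `prox z`. Comparing the objectives of `z₁` and `z₂`
at each other's minimizers gives the strong monotonicity
`(1 - μρ) ‖prox z₂ - prox z₁‖² ≤ ⟪z₂ - z₁, prox z₂ - prox z₁⟫`, and expanding
`‖(z₂ - z₁) - (prox z₂ - prox z₁)‖²` turns this into the Lipschitz bound
`max 1 (μρ / (1 - μρ))` for `D z = z - prox z`. Finally `x - S x = μ ∇g x + D (x - μ ∇g x)`,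
where the gradient step `x ↦ x - μ ∇g x` is `(1 + μβ)`-Lipschitz.
-/

open Set Filter Topology

open scoped RealInnerProductSpace

section InnerProductSpace

variable {E : Type*} [NormedAddCommGroup E] [InnerProductSpace ℝ E]

theorem StrongConvexOn.add_sq_norm_sub_le_of_isMinOn {s : Set E} {m : ℝ} {f : E → ℝ} {p y : E}
    (hf : StrongConvexOn s m f) (hp : p ∈ s) (hy : y ∈ s) (hmin : IsMinOn f s p) :
    f p + m / 2 * ‖y - p‖ ^ 2 ≤ f y := by
  have hcurve : ∀ t ∈ Ioo (0 : ℝ) 1, f p + (1 - t) * (m / 2 * ‖y - p‖ ^ 2) ≤ f y := by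
    rintro t ⟨ht0, ht1⟩
    have hconv := hf.2 hy hp ht0.le (sub_nonneg.2 ht1.le) (add_sub_cancel t 1)
    have hmin_t : f p ≤ f (t • y + (1 - t) • p) :=
      hmin (hf.1 hy hp ht0.le (sub_nonneg.2 ht1.le) (add_sub_cancel t 1))
    simp only [smul_eq_mul] at hconv
    have : t * (f p + (1 - t) * (m / 2 * ‖y - p‖ ^ 2) - f y) ≤ 0 := by linarith
    linarith [nonpos_of_mul_nonpos_right this ht0]
  have hlim : Tendsto (fun t : ℝ => f p + (1 - t) * (m / 2 * ‖y - p‖ ^ 2)) (𝓝[>] 0)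
      (𝓝 (f p + m / 2 * ‖y - p‖ ^ 2)) := by
    have hcont : Continuous fun t : ℝ => f p + (1 - t) * (m / 2 * ‖y - p‖ ^ 2) := by fun_prop
    simpa using (hcont.tendsto 0).mono_left nhdsWithin_le_nhds
  exact le_of_tendsto hlim (by filter_upwards [Ioo_mem_nhdsGT one_pos] using hcurve)

theorem strongConvexOn_add_norm_sub_sq {r : E → ℝ} {ρ : ℝ}
    (hr : ConvexOn ℝ univ fun z => r z + ρ / 2 * ‖z‖ ^ 2) (μ : ℝ) (z : E) :
    StrongConvexOn univ (μ⁻¹ - ρ) fun y => r y + 1 / (2 * μ) * ‖y - z‖ ^ 2 := by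
  rw [strongConvexOn_iff_convex]
  have haff := ((innerₛₗ ℝ (-μ⁻¹ • z)).convexOn convex_univ).add_const (‖z‖ ^ 2 / (2 * μ))
  refine (hr.add haff).congr fun y _ => ?_
  simp only [Pi.add_apply, coe_innerₛₗ_apply, real_inner_smul_left, norm_sub_sq_real,
    real_inner_comm z]
  ring

theorem mul_norm_prox_sub_prox_sq_le_inner {r : E → ℝ} {ρ μ : ℝ} (hμ : 0 < μ)
    (hr : ConvexOn ℝ univ fun z => r z + ρ / 2 * ‖z‖ ^ 2) {prox : E → E}
    (hprox : ∀ z y, r (prox z) + 1 / (2 * μ) * ‖prox z - z‖ ^ 2 ≤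
      r y + 1 / (2 * μ) * ‖y - z‖ ^ 2) (z₁ z₂ : E) :
    (1 - μ * ρ) * ‖prox z₂ - prox z₁‖ ^ 2 ≤ ⟪z₂ - z₁, prox z₂ - prox z₁⟫ := by
  have hgrowth (z y : E) := (strongConvexOn_add_norm_sub_sq hr μ z).add_sq_norm_sub_le_of_isMinOn
    (mem_univ _) (mem_univ y) fun y _ => hprox z y
  have h₁ := hgrowth z₁ (prox z₂)
  have h₂ := hgrowth z₂ (prox z₁)
  have hfour : ‖prox z₂ - z₁‖ ^ 2 + ‖prox z₁ - z₂‖ ^ 2 - ‖prox z₁ - z₁‖ ^ 2 - ‖prox z₂ - z₂‖ ^ 2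
      = 2 * ⟪z₂ - z₁, prox z₂ - prox z₁⟫ := by
    simp only [norm_sub_sq_real, inner_sub_left, inner_sub_right, real_inner_comm]
    ring
  rw [norm_sub_rev (prox z₁)] at h₂
  have hsum : (μ⁻¹ - ρ) * ‖prox z₂ - prox z₁‖ ^ 2 ≤ 1 / (2 * μ) *
      (‖prox z₂ - z₁‖ ^ 2 + ‖prox z₁ - z₂‖ ^ 2 - ‖prox z₁ - z₁‖ ^ 2 - ‖prox z₂ - z₂‖ ^ 2) := by
    linarith
  rw [hfour] at hsum
  calc (1 - μ * ρ) * ‖prox z₂ - prox z₁‖ ^ 2 = μ * ((μ⁻¹ - ρ) * ‖prox z₂ - prox z₁‖ ^ 2) := by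
        field_simp
    _ ≤ μ * (1 / (2 * μ) * (2 * ⟪z₂ - z₁, prox z₂ - prox z₁⟫)) := by gcongr
    _ = ⟪z₂ - z₁, prox z₂ - prox z₁⟫ := by field_simp

theorem norm_sub_le_max_mul_of_mul_sq_le_inner {u v : E} {c : ℝ} (hc : c < 1)
    (h : (1 - c) * ‖u‖ ^ 2 ≤ ⟪v, u⟫) : ‖v - u‖ ≤ max 1 (c / (1 - c)) * ‖v‖ := by
  have hc₀ : 0 < 1 - c := sub_pos.2 hc
  have hsq : ‖v - u‖ ^ 2 ≤ ‖v‖ ^ 2 + (2 * c - 1) * ‖u‖ ^ 2 := by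
    rw [norm_sub_sq_real]; linarith
  rcases le_or_gt c (1 / 2) with hc' | hc'
  · have : ‖v - u‖ ≤ ‖v‖ := by
      refine le_of_pow_le_pow_left₀ two_ne_zero (norm_nonneg v) ?_
      nlinarith [sq_nonneg ‖u‖]
    exact this.trans (le_mul_of_one_le_left (norm_nonneg v) (le_max_left _ _))
  · have hu : (1 - c) * ‖u‖ ≤ ‖v‖ := by
      nlinarith [real_inner_le_norm v u, norm_nonneg u, norm_nonneg v]
    have : ‖v - u‖ ≤ c / (1 - c) * ‖v‖ := by
      rw [div_mul_eq_mul_div, le_div_iff₀ hc₀]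
      refine le_of_pow_le_pow_left₀ two_ne_zero (by positivity) ?_
      have hu₂ := mul_le_mul_of_nonneg_left (pow_le_pow_left₀ (by positivity) hu 2)
        (by linarith : (0 : ℝ) ≤ 2 * c - 1)
      have hsq₂ := mul_le_mul_of_nonneg_left hsq (sq_nonneg (1 - c))
      linear_combination hsq₂ + hu₂
    exact this.trans (mul_le_mul_of_nonneg_right (le_max_right _ _) (norm_nonneg v))

theorem lipschitzWith_sub_prox {r : E → ℝ} {ρ μ : ℝ} (hμ : 0 < μ) (hμρ : μ * ρ < 1)
    (hr : ConvexOn ℝ univ fun z => r z + ρ / 2 * ‖z‖ ^ 2) {prox : E → E}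
    (hprox : ∀ z y, r (prox z) + 1 / (2 * μ) * ‖prox z - z‖ ^ 2 ≤
      r y + 1 / (2 * μ) * ‖y - z‖ ^ 2) :
    LipschitzWith (Real.toNNReal (max 1 (μ * ρ / (1 - μ * ρ)))) fun z => z - prox z := by
  refine LipschitzWith.of_dist_le' fun z₂ z₁ => ?_
  rw [dist_eq_norm, dist_eq_norm, sub_sub_sub_comm]
  exact norm_sub_le_max_mul_of_mul_sq_le_inner hμρ
    (mul_norm_prox_sub_prox_sq_le_inner hμ hr hprox z₁ z₂)

end InnerProductSpace

theorem prox_gradient_displacement_lipschitz_general {d : ℕ}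
    (g' : EuclideanSpace ℝ (Fin d) → EuclideanSpace ℝ (Fin d))
    (β : ℝ) (hβ : 0 < β) (hg' : LipschitzWith (Real.toNNReal β) g')
    (r : EuclideanSpace ℝ (Fin d) → ℝ) (ρ : ℝ)
    (hwc : ConvexOn ℝ Set.univ (fun z => r z + ρ / 2 * ‖z‖ ^ 2))
    (μ : ℝ) (hμ : μ ∈ Set.Ioo 0 ρ⁻¹)
    (prox : EuclideanSpace ℝ (Fin d) → EuclideanSpace ℝ (Fin d))
    (hprox : ∀ z y, r (prox z) + 1 / (2 * μ) * ‖prox z - z‖ ^ 2 ≤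
      r y + 1 / (2 * μ) * ‖y - z‖ ^ 2) :
    LipschitzWith (Real.toNNReal (μ * β + (1 + μ * β) * max 1 (μ * ρ / (1 - μ * ρ))))
      (fun x => x - prox (x - μ • g' x)) := by
  obtain ⟨hμ, hμρ_inv⟩ := hμ
  have hρ : 0 < ρ := inv_pos.1 (hμ.trans hμρ_inv)
  have hμρ : μ * ρ < 1 := (lt_div_iff₀ hρ).1 (by rwa [one_div])
  have hgrad := (lipschitzWith_smul μ).comp hg'
  have hstep := LipschitzWith.id.sub hgrad
  have hdisp := (lipschitzWith_sub_prox hμ hμρ hwc hprox).comp hstep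
  have hK : 0 ≤ max 1 (μ * ρ / (1 - μ * ρ)) := zero_le_one.trans (le_max_left _ _)
  have hconst : Real.toNNReal (μ * β + (1 + μ * β) * max 1 (μ * ρ / (1 - μ * ρ))) =
      ‖μ‖₊ * β.toNNReal + (max 1 (μ * ρ / (1 - μ * ρ))).toNNReal * (1 + ‖μ‖₊ * β.toNNReal) := by
    rw [← NNReal.coe_inj, Real.coe_toNNReal _ (by positivity)]
    push_cast [Real.coe_toNNReal _ hβ.le, Real.coe_toNNReal _ hK, Real.norm_of_nonneg hμ.le]
    ring
  have hsplit : (fun x => x - prox (x - μ • g' x)) =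
      fun x => μ • g' x + ((x - μ • g' x) - prox (x - μ • g' x)) := by
    funext x
    abel
  rw [hconst, hsplit]
  exact hgrad.add hdisp

/-- For `g` differentiable with `β`-Lipschitz gradient, `r` continuous and
`ρ`-weakly convex, and `μ ∈ (0, ρ⁻¹)`, the displacement map `x ↦ x − S(x)` of the proximal
gradient map `S(x) = prox_{μr}(x − μ∇g(x))` is Lipschitz with constant
`μβ + (1 + μβ)·max{1, μρ/(1 − μρ)}`. -/
theorem prox_gradient_displacement_lipschitz {d : ℕ}
    (g : EuclideanSpace ℝ (Fin d) → ℝ)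
    (g' : EuclideanSpace ℝ (Fin d) → EuclideanSpace ℝ (Fin d))
    (hg : ∀ x, HasGradientAt g (g' x) x)
    (β : ℝ) (hβ : 0 < β) (hg' : LipschitzWith (Real.toNNReal β) g')
    (r : EuclideanSpace ℝ (Fin d) → ℝ) (ρ : ℝ) (hρ : 0 < ρ)
    (hwc : ConvexOn ℝ Set.univ (fun z => r z + ρ / 2 * ‖z‖ ^ 2))
    (hr : Continuous r) (μ : ℝ) (hμ : μ ∈ Set.Ioo 0 ρ⁻¹)
    (prox : EuclideanSpace ℝ (Fin d) → EuclideanSpace ℝ (Fin d))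
    (hprox : ∀ z y, r (prox z) + 1 / (2 * μ) * ‖prox z - z‖ ^ 2 ≤
      r y + 1 / (2 * μ) * ‖y - z‖ ^ 2) :
    LipschitzWith (Real.toNNReal (μ * β + (1 + μ * β) * max 1 (μ * ρ / (1 - μ * ρ))))
      (fun x => x - prox (x - μ • g' x)) :=
  prox_gradient_displacement_lipschitz_general g' β hβ hg' r ρ hwc μ hμ prox hprox
end

section
/- Let h : ℝ^m → ℝ be convex, let F : ℝ^d → ℝ^m be differentiable, let r : ℝ^d → ℝ be ρ-weakly convex, and suppose there exists β > 0 such that |h(F(y)) − h(F(x) + ∇F(x)(y − x))| ≤ (β/2)‖y − x‖² for all x, y ∈ ℝ^d. Then the composite function f(x) = h(F(x)) + r(x) is (β + ρ)-weakly convex, i.e., x ↦ f(x) + ((β + ρ)/2)‖x‖² is convex. -/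
open Set

/-!
Write `f = h ∘ F`. At every base point `z`, the linearized model `y ↦ h (F z + F' z (y - z))` is
convex, agrees with `f` at `z`, and by the approximation bound lies below `f + (β/2)‖· - z‖²`.
Evaluating the model at a convex combination `z = a x + b y` and using its convexity gives
`f z ≤ a (f x + (β/2)‖x - z‖²) + b (f y + (β/2)‖y - z‖²)`; the variance identity
`a ‖x - z‖² + b ‖y - z‖² = a ‖x‖² + b ‖y‖² - ‖z‖²` turns this into convexity of `f + (β/2)‖·‖²`.
Adding the convex function `r + (ρ/2)‖·‖²` finishes the proof.
-/

section InnerProductSpace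

variable {E : Type*} [NormedAddCommGroup E] [InnerProductSpace ℝ E]

theorem weighted_sq_norm_sub_convexCombination {a b : ℝ} (hab : a + b = 1) (x y : E) :
    a * ‖x - (a • x + b • y)‖ ^ 2 + b * ‖y - (a • x + b • y)‖ ^ 2
      = a * ‖x‖ ^ 2 + b * ‖y‖ ^ 2 - ‖a • x + b • y‖ ^ 2 := by
  set z := a • x + b • y
  have hz : ‖z‖ ^ 2 = a * inner ℝ x z + b * inner ℝ y z :=
    calc ‖z‖ ^ 2 = inner ℝ (a • x + b • y) z := (real_inner_self_eq_norm_sq z).symm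
      _ = _ := by rw [inner_add_left, real_inner_smul_left, real_inner_smul_left]
  rw [norm_sub_sq_real, norm_sub_sq_real]
  linear_combination 2 * hz + ‖z‖ ^ 2 * hab

theorem convexOn_add_sq_norm_of_convex_models {f : E → ℝ} {β : ℝ} (model : E → E → ℝ)
    (hmodel : ∀ z, ConvexOn ℝ univ (model z)) (hcenter : ∀ z, f z ≤ model z z)
    (hle : ∀ z y, model z y ≤ f y + β / 2 * ‖y - z‖ ^ 2) :
    ConvexOn ℝ univ (fun x => f x + β / 2 * ‖x‖ ^ 2) := by
  refine ⟨convex_univ, fun x _ y _ a b ha hb hab => ?_⟩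
  set z := a • x + b • y
  have hfz : f z ≤ a * (f x + β / 2 * ‖x - z‖ ^ 2) + b * (f y + β / 2 * ‖y - z‖ ^ 2) :=
    calc f z ≤ model z z := hcenter z
      _ ≤ a * model z x + b * model z y := (hmodel z).2 trivial trivial ha hb hab
      _ ≤ _ := add_le_add (mul_le_mul_of_nonneg_left (hle z x) ha)
          (mul_le_mul_of_nonneg_left (hle z y) hb)
  have hvar := weighted_sq_norm_sub_convexCombination hab x y
  simp only [smul_eq_mul]
  linear_combination hfz + β / 2 * hvar

end InnerProductSpace

theorem ConvexOn.comp_add_linearMap_sub {E V : Type*} [AddCommGroup E] [Module ℝ E]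
    [AddCommGroup V] [Module ℝ V] {h : V → ℝ} (hconv : ConvexOn ℝ univ h) (c : V)
    (L : E →ₗ[ℝ] V) (z : E) : ConvexOn ℝ univ (fun y => h (c + L (y - z))) := by
  have := (hconv.translate_right (c - L z)).comp_linearMap L
  simp only [preimage_univ] at this
  convert this using 2 with y
  simp only [Function.comp_apply, map_sub]
  abel_nf

theorem composite_weakly_convex_general {d m : ℕ}
    (h : EuclideanSpace ℝ (Fin m) → ℝ) (hconv : ConvexOn ℝ Set.univ h)
    (F : EuclideanSpace ℝ (Fin d) → EuclideanSpace ℝ (Fin m))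
    (F' : EuclideanSpace ℝ (Fin d) → (EuclideanSpace ℝ (Fin d) →L[ℝ] EuclideanSpace ℝ (Fin m)))
    (r : EuclideanSpace ℝ (Fin d) → ℝ) (ρ : ℝ)
    (hwc : ConvexOn ℝ Set.univ (fun z => r z + ρ / 2 * ‖z‖ ^ 2))
    (β : ℝ)
    (happrox : ∀ x y, |h (F y) - h (F x + F' x (y - x))| ≤ β / 2 * ‖y - x‖ ^ 2) :
    ConvexOn ℝ Set.univ (fun x => (h (F x) + r x) + (β + ρ) / 2 * ‖x‖ ^ 2) := by
  have hcomp : ConvexOn ℝ univ (fun x => h (F x) + β / 2 * ‖x‖ ^ 2) :=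
    convexOn_add_sq_norm_of_convex_models (fun z y => h (F z + F' z (y - z)))
      (fun z => hconv.comp_add_linearMap_sub (F z) (F' z).toLinearMap z)
      (fun z => by simp)
      (fun z y => by linarith [(abs_le.mp (happrox z y)).1])
  exact (hcomp.add hwc).congr fun x _ => by simp only [Pi.add_apply]; ring

/-- If `h` is convex, `F` is differentiable, `r` is `ρ`-weakly convex, and the
composition satisfies the quadratic approximation bound
`|h(F(y)) − h(F(x) + ∇F(x)(y − x))| ≤ (β/2)‖y − x‖²`, then the composite function
`f = h ∘ F + r` is `(β + ρ)`-weakly convex. -/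
theorem composite_weakly_convex {d m : ℕ}
    (h : EuclideanSpace ℝ (Fin m) → ℝ) (hconv : ConvexOn ℝ Set.univ h)
    (F : EuclideanSpace ℝ (Fin d) → EuclideanSpace ℝ (Fin m))
    (F' : EuclideanSpace ℝ (Fin d) → (EuclideanSpace ℝ (Fin d) →L[ℝ] EuclideanSpace ℝ (Fin m)))
    (hF : ∀ x, HasFDerivAt F (F' x) x)
    (r : EuclideanSpace ℝ (Fin d) → ℝ) (ρ : ℝ) (hρ : 0 < ρ)
    (hwc : ConvexOn ℝ Set.univ (fun z => r z + ρ / 2 * ‖z‖ ^ 2))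
    (β : ℝ) (hβ : 0 < β)
    (happrox : ∀ x y, |h (F y) - h (F x + F' x (y - x))| ≤ β / 2 * ‖y - x‖ ^ 2) :
    ConvexOn ℝ Set.univ (fun x => (h (F x) + r x) + (β + ρ) / 2 * ‖x‖ ^ 2) :=
  composite_weakly_convex_general h hconv F F' r ρ hwc β happrox
end

section
/- Let f : ℝ^d → ℝ be ρ-weakly convex and continuous, and let g : ℝ^d → ℝ be η-weakly convex and continuous (g playing the role of the model f_x of f at a point x ∈ ℝ^d) with |f(y) − g(y)| ≤ (β/2)‖y − x‖² for all y ∈ ℝ^d. Let τ and ρ̂ be constants satisfying ρ̂ > ρ, τ > η, and ρ̂ + τ − ρ − η > 0. Let x̂ be the unique minimizer of z ↦ f(z) + (ρ̂/2)‖z − x‖² and let y be the unique minimizer of z ↦ g(z) + (τ/2)‖z − x‖². Then ‖x̂ − y‖² ≤ ‖x̂ − x‖² − ((2ρ̂ − ρ − η − β)/(ρ̂ + τ − ρ − η))‖x̂ − x‖² − ((τ − ρ̂ − β)/(ρ̂ + τ − ρ − η))‖x − y‖². -/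
open Set Filter Topology

local notation "⟪" a ", " b "⟫" => @inner ℝ _ _ a b

lemma norm_add_smul_sq {d : ℕ} (a b : EuclideanSpace ℝ (Fin d)) (t : ℝ) :
    ‖a + t • b‖ ^ 2 = ‖a‖ ^ 2 + 2 * (t * ⟪a, b⟫) + t ^ 2 * ‖b‖ ^ 2 := by
  rw [norm_add_sq_real, real_inner_smul_right, norm_smul]
  simp [mul_pow, sq_abs]

lemma strong_min {d : ℕ} (f : EuclideanSpace ℝ (Fin d) → ℝ) (ρ c : ℝ) (hc : ρ < c)
    (hconv : ConvexOn ℝ Set.univ (fun z => f z + ρ / 2 * ‖z‖ ^ 2))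
    (x xh : EuclideanSpace ℝ (Fin d))
    (hmin : ∀ z, f xh + c / 2 * ‖xh - x‖ ^ 2 ≤ f z + c / 2 * ‖z - x‖ ^ 2)
    (z : EuclideanSpace ℝ (Fin d)) :
    f xh + c / 2 * ‖xh - x‖ ^ 2 + (c - ρ) / 2 * ‖z - xh‖ ^ 2
      ≤ f z + c / 2 * ‖z - x‖ ^ 2 := by
  set φ : EuclideanSpace ℝ (Fin d) → ℝ := fun w => f w + ρ / 2 * ‖w‖ ^ 2 with hφ
  set v := z - xh with hv
  set L : ℝ := φ z - φ xh - ρ * ⟪xh, v⟫ + c * ⟪xh - x, v⟫ with hL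
  clear_value φ v L
  have key : ∀ t : ℝ, 0 < t → t ≤ 1 → 0 ≤ L + t * ((c - ρ) / 2 * ‖v‖ ^ 2) := by
    intro t ht ht1
    have hzt : (1 - t) • xh + t • z = xh + t • v := by
      rw [hv]; module
    have hcv := hconv.2 (Set.mem_univ xh) (Set.mem_univ z)
      (by linarith : (0:ℝ) ≤ 1 - t) ht.le (by ring)
    rw [hzt] at hcv
    have hm := hmin (xh + t • v)
    have e1 : ‖xh + t • v‖ ^ 2 = ‖xh‖ ^ 2 + 2 * (t * ⟪xh, v⟫) + t ^ 2 * ‖v‖ ^ 2 :=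
      norm_add_smul_sq xh v t
    have e2 : ‖xh + t • v - x‖ ^ 2
        = ‖xh - x‖ ^ 2 + 2 * (t * ⟪xh - x, v⟫) + t ^ 2 * ‖v‖ ^ 2 := by
      have : xh + t • v - x = (xh - x) + t • v := by abel
      rw [this, norm_add_smul_sq]
    have hfz : f (xh + t • v) = φ (xh + t • v) - ρ / 2 * ‖xh + t • v‖ ^ 2 := by
      simp [hφ]
    have hfxh : f xh = φ xh - ρ / 2 * ‖xh‖ ^ 2 := by simp [hφ]
    rw [hfz] at hm
    rw [e1, e2, hfxh] at hm
    -- 0 ≤ t * L + t^2 * K, divide by t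
    have h0 : 0 ≤ t * (L + t * ((c - ρ) / 2 * ‖v‖ ^ 2)) := by
      rw [hL]
      rw [smul_eq_mul, smul_eq_mul] at hcv
      nlinarith [hcv, hm]
    exact nonneg_of_mul_nonneg_right h0 ht
  have hLnn : 0 ≤ L := by
    have h := le_of_forall_pos_le_add (a := (0:ℝ)) (b := L) ?_
    · exact h
    intro ε hε
    set K : ℝ := (c - ρ) / 2 * ‖v‖ ^ 2 with hK
    have hKnn : 0 ≤ K := mul_nonneg (by linarith) (sq_nonneg _)
    set t : ℝ := min 1 (ε / (K + 1)) with htdef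
    have ht : 0 < t := lt_min one_pos (div_pos hε (by linarith))
    have ht1 : t ≤ 1 := min_le_left _ _
    have htK : t * K ≤ ε := by
      have h1 : t ≤ ε / (K + 1) := min_le_right _ _
      calc t * K ≤ (ε / (K + 1)) * K := by nlinarith
        _ ≤ ε := by
          rw [div_mul_eq_mul_div, div_le_iff₀ (by linarith)]
          nlinarith
    have := key t ht ht1
    linarith
  -- conclude
  have e1 : ‖z‖ ^ 2 = ‖xh‖ ^ 2 + 2 * ⟪xh, v⟫ + ‖v‖ ^ 2 := by
    have := norm_add_smul_sq xh v 1
    simpa [hv] using this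
  have e2 : ‖z - x‖ ^ 2 = ‖xh - x‖ ^ 2 + 2 * ⟪xh - x, v⟫ + ‖v‖ ^ 2 := by
    have := norm_add_smul_sq (xh - x) v 1
    have hz : z - x = (xh - x) + (1:ℝ) • v := by rw [hv]; module
    rw [hz, this]; ring
  rw [show f z = φ z - ρ / 2 * ‖z‖ ^ 2 from by simp [hφ],
    show f xh = φ xh - ρ / 2 * ‖xh‖ ^ 2 from by simp [hφ], e1, e2]
  rw [hL] at hLnn
  ring_nf at hLnn ⊢
  linarith [hLnn]

/-- Key comparison lemma: Let `f` be `ρ`-weakly convex and `g` an `η`-weakly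
convex model at `x` with `|f(y) − g(y)| ≤ (β/2)‖y − x‖²`. Given `ρ̂ > ρ`, `τ > η`, and
`ρ̂ + τ − ρ − η > 0`, let `x̂` minimize `z ↦ f(z) + (ρ̂/2)‖z − x‖²` and `y` minimize
`z ↦ g(z) + (τ/2)‖z − x‖²`. Then
`‖x̂ − y‖² ≤ ‖x̂ − x‖² − ((2ρ̂ − ρ − η − β)/(ρ̂ + τ − ρ − η))‖x̂ − x‖²
  − ((τ − ρ̂ − β)/(ρ̂ + τ − ρ − η))‖x − y‖²`. -/
theorem model_prox_comparison {d : ℕ}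
    (f g : EuclideanSpace ℝ (Fin d) → ℝ)
    (ρ η β : ℝ) (hρ : 0 < ρ) (hη : 0 < η) (hβ : 0 < β)
    (hfwc : ConvexOn ℝ Set.univ (fun z => f z + ρ / 2 * ‖z‖ ^ 2))
    (hf : Continuous f)
    (hgwc : ConvexOn ℝ Set.univ (fun z => g z + η / 2 * ‖z‖ ^ 2))
    (hg : Continuous g)
    (x : EuclideanSpace ℝ (Fin d))
    (happrox : ∀ y, |f y - g y| ≤ β / 2 * ‖y - x‖ ^ 2)
    (rh τ : ℝ) (hrh : rh > ρ) (hτ : τ > η) (hsum : rh + τ - ρ - η > 0)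
    (xhat y : EuclideanSpace ℝ (Fin d))
    (hxhat : ∀ z, f xhat + rh / 2 * ‖xhat - x‖ ^ 2 ≤ f z + rh / 2 * ‖z - x‖ ^ 2)
    (hy : ∀ z, g y + τ / 2 * ‖y - x‖ ^ 2 ≤ g z + τ / 2 * ‖z - x‖ ^ 2) :
    ‖xhat - y‖ ^ 2 ≤ ‖xhat - x‖ ^ 2
      - (2 * rh - ρ - η - β) / (rh + τ - ρ - η) * ‖xhat - x‖ ^ 2
      - (τ - rh - β) / (rh + τ - ρ - η) * ‖x - y‖ ^ 2 := by
  have h1 := strong_min f ρ rh hrh hfwc x xhat hxhat y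
  have h2 := strong_min g η τ hτ hgwc x y hy xhat
  have h3 := abs_le.mp (happrox y)
  have h4 := abs_le.mp (happrox xhat)
  have n1 : ‖y - xhat‖ = ‖xhat - y‖ := norm_sub_rev _ _
  have n2 : ‖y - x‖ = ‖x - y‖ := norm_sub_rev _ _
  rw [n1, n2] at h1
  rw [n2] at h2 h3
  have key : (rh + τ - ρ - η) * ‖xhat - y‖ ^ 2
      ≤ (τ - rh + β) * ‖xhat - x‖ ^ 2 - (τ - rh - β) * ‖x - y‖ ^ 2 := by
    nlinarith [h1, h2, h3.1, h3.2, h4.1, h4.2]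
  have hrw : ‖xhat - x‖ ^ 2
      - (2 * rh - ρ - η - β) / (rh + τ - ρ - η) * ‖xhat - x‖ ^ 2
      - (τ - rh - β) / (rh + τ - ρ - η) * ‖x - y‖ ^ 2
      = ((τ - rh + β) * ‖xhat - x‖ ^ 2 - (τ - rh - β) * ‖x - y‖ ^ 2)
        / (rh + τ - ρ - η) := by
    field_simp
    ring
  rw [hrw, le_div_iff₀ hsum]
  linarith [key]
end

section
/- Let f : ℝ^d → ℝ be ρ-weakly convex and continuous, with ρ, η, β > 0. Suppose that for each x ∈ ℝ^d there is a continuous η-weakly convex model f_x : ℝ^d → ℝ with |f(y) − f_x(y)| ≤ (β/2)‖y − x‖² for all y. Let τ > max{η, 2ρ, (4β + ρ + η)/2}, set ρ̂ = τ/2 + (ρ + η)/4, and fix α ∈ (0, 1]. For a point x ∈ ℝ^d, let y be the unique minimizer of z ↦ f_x(z) + (τ/2)‖z − x‖² and set x⁺ = (1 − α)x + αy. Denote by P(u) the unique minimizer of z ↦ f(z) + (ρ̂/2)‖z − u‖², so that ρ̂(u − P(u)) is the gradient of the Moreau envelope at u. Then the relative error bound holds: ‖ρ̂(x⁺ − P(x⁺))‖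 ≤ ( max{ρ̂, ρ/(1 − ρ/ρ̂)} + (ρ̂/α)·1/(1 − √(1 − (2ρ̂ − ρ − η − β)/(ρ̂ + τ − ρ − η))) )·‖x⁺ − x‖. -/
open Set Filter Topology RealInnerProductSpace

section Aux
variable {E : Type*} [NormedAddCommGroup E] [InnerProductSpace ℝ E]

lemma aux_affine (u : E) (a b : ℝ) : ConvexOn ℝ Set.univ (fun z : E => a * ⟪u, z⟫ + b) := by
  refine ⟨convex_univ, ?_⟩
  intro p _ q _ cp cq h1 h2 hpq
  apply le_of_eq
  simp only [inner_add_right, real_inner_smul_right, smul_eq_mul]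
  linear_combination (-b) * hpq

lemma aux_conv (g : E → ℝ) (c r : ℝ)
    (hg : ConvexOn ℝ Set.univ (fun z => g z + c / 2 * ‖z‖ ^ 2)) (u : E) :
    ConvexOn ℝ Set.univ (fun z => g z + r / 2 * ‖z - u‖ ^ 2 - (r - c) / 2 * ‖z‖ ^ 2) := by
  have heq : (fun z : E => g z + r / 2 * ‖z - u‖ ^ 2 - (r - c) / 2 * ‖z‖ ^ 2)
      = fun z : E => (g z + c / 2 * ‖z‖ ^ 2) + ((-r) * ⟪u, z⟫ + r / 2 * ‖u‖ ^ 2) := by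
    funext z
    rw [norm_sub_sq_real, real_inner_comm z u]
    ring
  rw [heq]
  exact hg.add (aux_affine u (-r) (r / 2 * ‖u‖ ^ 2))

lemma aux_growth (g : E → ℝ) (μ : ℝ) (_hμ : 0 < μ)
    (hconv : ConvexOn ℝ Set.univ (fun z => g z - μ / 2 * ‖z‖ ^ 2))
    (m : E) (hm : ∀ z, g m ≤ g z) :
    ∀ z, g m + μ / 2 * ‖z - m‖ ^ 2 ≤ g z := by
  intro z
  have key : ∀ t : ℝ, t ∈ Set.Ioo (0:ℝ) 1 → μ/2 * (1 - t) * ‖z - m‖^2 ≤ g z - g m := by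
    intro t ht
    have h01 : (0:ℝ) ≤ 1 - t := by linarith [ht.2]
    have hcomb := hconv.2 (Set.mem_univ m) (Set.mem_univ z) h01 (le_of_lt ht.1) (by ring)
    simp only [smul_eq_mul] at hcomb
    have hw := hm ((1-t) • m + t • z)
    have hid : ‖(1-t) • m + t • z‖^2 = (1-t)*‖m‖^2 + t*‖z‖^2 - t*(1-t)*‖z - m‖^2 := by
      have e1 : ∀ u : E, ‖u‖^2 = ⟪u,u⟫ := fun u => (real_inner_self_eq_norm_sq u).symm
      simp only [e1, inner_add_add_self, inner_sub_sub_self, real_inner_smul_left,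
        real_inner_smul_right]
      ring
    rw [hid] at hcomb
    have ht0 : 0 < t := ht.1
    have hmul : t * (μ/2 * (1 - t) * ‖z - m‖^2) ≤ t * (g z - g m) := by linarith only [hcomb, hw]
    exact le_of_mul_le_mul_left hmul ht0
  have hlim : Tendsto (fun t : ℝ => μ/2*(1-t)*‖z-m‖^2) (𝓝[>] (0:ℝ))
      (𝓝 (μ/2*(1-(0:ℝ))*‖z-m‖^2)) := by
    apply Tendsto.mono_left _ nhdsWithin_le_nhds
    exact Continuous.tendsto (by continuity) 0
  have hev : ∀ᶠ t in 𝓝[>] (0:ℝ), μ/2*(1-t)*‖z-m‖^2 ≤ g z - g m := by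
    filter_upwards [Ioo_mem_nhdsGT_of_mem (by constructor <;> norm_num : (0:ℝ) ∈ Set.Ico (0:ℝ) 1)]
      with t ht using key t ht
  have := le_of_tendsto hlim hev
  simp only [sub_zero] at this
  linarith

lemma inner_ident (a b u v : E) :
    ‖b - u‖^2 - ‖a - u‖^2 + ‖a - v‖^2 - ‖b - v‖^2 = 2 * ⟪a - b, u - v⟫ := by
  simp only [norm_sub_sq_real, inner_sub_left, inner_sub_right]
  ring

end Aux

set_option maxHeartbeats 1000000 in
/-- Relative error: In the setting of relaxed model-based algorithms (`f`
`ρ`-weakly convex with `η`-weakly convex models and `β`-accuracy,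
`τ > max{η, 2ρ, (4β + ρ + η)/2}`, `ρ̂ = τ/2 + (ρ + η)/4`, `α ∈ (0,1]`, `y` minimizing the
model subproblem at `x`, `x⁺ = (1−α)x + αy`, and `P u` the proximal point at `u`), the
gradient of the Moreau envelope at `x⁺` satisfies
`‖ρ̂(x⁺ − P x⁺)‖ ≤ (max{ρ̂, ρ/(1 − ρ/ρ̂)} + (ρ̂/α)/(1 − √(1 − (2ρ̂ − ρ − η − β)/(ρ̂ + τ − ρ − η))))‖x⁺ − x‖`. -/
theorem model_based_relative_error {d : ℕ}
    (f : EuclideanSpace ℝ (Fin d) → ℝ)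
    (ρ η β : ℝ) (hρ : 0 < ρ) (hη : 0 < η) (hβ : 0 < β)
    (hfwc : ConvexOn ℝ Set.univ (fun z => f z + ρ / 2 * ‖z‖ ^ 2))
    (hf : Continuous f)
    (model : EuclideanSpace ℝ (Fin d) → EuclideanSpace ℝ (Fin d) → ℝ)
    (hmwc : ∀ x, ConvexOn ℝ Set.univ (fun z => model x z + η / 2 * ‖z‖ ^ 2))
    (hmcont : ∀ x, Continuous (model x))
    (happrox : ∀ x y, |f y - model x y| ≤ β / 2 * ‖y - x‖ ^ 2)
    (τ : ℝ) (hτ : τ > max η (max (2 * ρ) ((4 * β + ρ + η) / 2)))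
    (rh : ℝ) (hrh : rh = τ / 2 + (ρ + η) / 4)
    (α : ℝ) (hα : α ∈ Set.Ioc (0 : ℝ) 1)
    (P : EuclideanSpace ℝ (Fin d) → EuclideanSpace ℝ (Fin d))
    (hP : ∀ u z, f (P u) + rh / 2 * ‖P u - u‖ ^ 2 ≤ f z + rh / 2 * ‖z - u‖ ^ 2)
    (x y : EuclideanSpace ℝ (Fin d))
    (hy : ∀ z, model x y + τ / 2 * ‖y - x‖ ^ 2 ≤ model x z + τ / 2 * ‖z - x‖ ^ 2)
    (xp : EuclideanSpace ℝ (Fin d)) (hxp : xp = (1 - α) • x + α • y) :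
    ‖rh • (xp - P xp)‖ ≤
      (max rh (ρ / (1 - ρ / rh)) +
        (rh / α) * (1 / (1 - Real.sqrt (1 - (2 * rh - ρ - η - β) / (rh + τ - ρ - η))))) *
      ‖xp - x‖ := by
  obtain ⟨hα0, hα1⟩ := hα
  have hτη : η < τ := lt_of_le_of_lt (le_max_left _ _) hτ
  have hτρ : 2 * ρ < τ := lt_of_le_of_lt (le_trans (le_max_left _ _) (le_max_right _ _)) hτ
  have hτβ : (4 * β + ρ + η) / 2 < τ :=
    lt_of_le_of_lt (le_trans (le_max_right _ _) (le_max_right _ _)) hτ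
  have hrh0 : 0 < rh := by rw [hrh]; linarith
  have hrhρ : ρ < rh := by rw [hrh]; linarith
  have hnum : 0 < 2 * rh - ρ - η - β := by rw [hrh]; linarith
  have hden : 0 < rh + τ - ρ - η := by rw [hrh]; linarith
  have hβτ : rh + β - τ ≤ 0 := by rw [hrh]; linarith
  -- growth inequalities
  have growF : ∀ u z : EuclideanSpace ℝ (Fin d),
      f (P u) + rh / 2 * ‖P u - u‖ ^ 2 + (rh - ρ) / 2 * ‖z - P u‖ ^ 2
        ≤ f z + rh / 2 * ‖z - u‖ ^ 2 := by
    intro u z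
    exact aux_growth (fun z => f z + rh / 2 * ‖z - u‖ ^ 2) (rh - ρ) (by linarith)
      (aux_conv f ρ rh hfwc u) (P u) (hP u) z
  have growM : ∀ z, model x y + τ / 2 * ‖y - x‖ ^ 2 + (τ - η) / 2 * ‖z - y‖ ^ 2
      ≤ model x z + τ / 2 * ‖z - x‖ ^ 2 := by
    intro z
    exact aux_growth (fun z => model x z + τ / 2 * ‖z - x‖ ^ 2) (τ - η) (by linarith)
      (aux_conv (model x) η τ (hmwc x) x) y hy z
  set c := (2 * rh - ρ - η - β) / (rh + τ - ρ - η) with hcdef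
  set r1 := Real.sqrt (1 - c) with hr1def
  have hc0 : 0 < c := div_pos hnum hden
  have hc1 : c ≤ 1 := by rw [hcdef, div_le_one hden]; linarith
  have h1c0 : 0 ≤ 1 - c := by linarith
  have hr1sq : r1 ^ 2 = 1 - c := Real.sq_sqrt h1c0
  have hr1nn : 0 ≤ r1 := Real.sqrt_nonneg _
  have hr1lt : r1 < 1 := by
    have h := Real.sqrt_lt_sqrt h1c0 (by linarith : 1 - c < 1)
    rw [Real.sqrt_one] at h
    rw [hr1def]; exact h
  have h1r1 : 0 < 1 - r1 := by linarith
  -- step 1: ‖y - P x‖ ≤ r1 ‖P x - x‖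
  have h1 := growF x y
  have h2 := growM (P x)
  rw [show ‖P x - y‖ = ‖y - P x‖ from norm_sub_rev _ _] at h2
  have h3 : f y - model x y ≤ β / 2 * ‖y - x‖ ^ 2 := (abs_le.mp (happrox x y)).2
  have h4 : model x (P x) - f (P x) ≤ β / 2 * ‖P x - x‖ ^ 2 := by
    have := (abs_le.mp (happrox x (P x))).1; linarith
  have hkey : (rh + τ - ρ - η) / 2 * ‖y - P x‖ ^ 2 ≤ (β + τ - rh) / 2 * ‖P x - x‖ ^ 2 := by
    have hylower : (rh + β - τ) / 2 * ‖y - x‖ ^ 2 ≤ 0 :=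
      mul_nonpos_of_nonpos_of_nonneg (by linarith) (sq_nonneg _)
    linarith only [h1, h2, h3, h4, hylower]
  have hi2 : ‖y - P x‖ ^ 2 ≤ (1 - c) * ‖P x - x‖ ^ 2 := by
    have h1mc : 1 - c = (β + τ - rh) / (rh + τ - ρ - η) := by
      rw [hcdef]; field_simp; ring
    rw [h1mc, div_mul_eq_mul_div, le_div_iff₀ hden]
    linarith only [hkey]
  have hi3 : ‖y - P x‖ ≤ r1 * ‖x - P x‖ := by
    have h := Real.sqrt_le_sqrt hi2
    rw [Real.sqrt_sq (norm_nonneg _), Real.sqrt_mul h1c0, Real.sqrt_sq (norm_nonneg _),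
      ← hr1def] at h
    rwa [show ‖P x - x‖ = ‖x - P x‖ from norm_sub_rev _ _] at h
  have htri1 : ‖x - P x‖ ≤ ‖y - x‖ + ‖y - P x‖ := by
    have h := norm_add_le (x - y) (y - P x)
    rw [sub_add_sub_cancel] at h
    rwa [show ‖x - y‖ = ‖y - x‖ from norm_sub_rev _ _] at h
  have hi5 : ‖x - P x‖ ≤ 1 / (1 - r1) * ‖y - x‖ := by
    rw [one_div_mul_eq_div, le_div_iff₀ h1r1]
    linarith only [htri1, hi3]
  -- step 2: monotonicity of P
  have h5 := growF xp (P x)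
  have h6 := growF x (P xp)
  rw [show ‖P x - P xp‖ = ‖P xp - P x‖ from norm_sub_rev _ _] at h5
  have hid2 := inner_ident (P xp) (P x) xp x
  have hid3 : rh/2*‖P x - xp‖^2 - rh/2*‖P xp - xp‖^2 + rh/2*‖P xp - x‖^2 - rh/2*‖P x - x‖^2
      = rh * ⟪P xp - P x, xp - x⟫ := by
    linear_combination (rh/2) * hid2
  have hmono : (rh - ρ) * ‖P xp - P x‖ ^ 2 ≤ rh * ⟪P xp - P x, xp - x⟫ := by
    linarith only [h5, h6, hid3]
  have hCS : ⟪P xp - P x, xp - x⟫ ≤ ‖P xp - P x‖ * ‖xp - x‖ := real_inner_le_norm (P xp - P x) (xp - x)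
  have hnsq : ‖(xp - x) - (P xp - P x)‖ ^ 2 = ‖xp - x‖ ^ 2 - 2 * ⟪P xp - P x, xp - x⟫ + ‖P xp - P x‖ ^ 2 := by
    rw [norm_sub_sq_real, real_inner_comm (xp - x) (P xp - P x)]
  set M := max rh (ρ / (1 - ρ / rh)) with hMdef
  have hMrh : rh ≤ M := le_max_left _ _
  have hM2 : ρ * rh / (rh - ρ) ≤ M := by
    have he : ρ / (1 - ρ / rh) = ρ * rh / (rh - ρ) := by
      rw [show 1 - ρ / rh = (rh - ρ) / rh by field_simp, div_div_eq_mul_div]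
    rw [hMdef, ← he]; exact le_max_right _ _
  have hLip : rh * ‖(xp - x) - (P xp - P x)‖ ≤ M * ‖xp - x‖ := by
    rcases le_or_gt rh (2 * (rh - ρ)) with hcase | hcase
    · have hnsq' : rh * ‖(xp - x) - (P xp - P x)‖ ^ 2 = rh * ‖xp - x‖ ^ 2 - 2 * (rh * ⟪P xp - P x, xp - x⟫) + rh * ‖P xp - P x‖ ^ 2 := by
        linear_combination rh * hnsq
      have hhint : 0 ≤ (2 * (rh - ρ) - rh) * ‖P xp - P x‖ ^ 2 :=
        mul_nonneg (by linarith) (sq_nonneg _)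
      have hsq : ‖(xp - x) - (P xp - P x)‖ ^ 2 ≤ ‖xp - x‖ ^ 2 :=
        le_of_mul_le_mul_left (by linarith only [hmono, hnsq', hhint]) hrh0
      have hle : ‖(xp - x) - (P xp - P x)‖ ≤ ‖xp - x‖ := by
        calc ‖(xp - x) - (P xp - P x)‖ = Real.sqrt (‖(xp - x) - (P xp - P x)‖ ^ 2) := (Real.sqrt_sq (norm_nonneg _)).symm
          _ ≤ Real.sqrt (‖xp - x‖ ^ 2) := Real.sqrt_le_sqrt hsq
          _ = ‖xp - x‖ := Real.sqrt_sq (norm_nonneg _)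
      calc rh * ‖(xp - x) - (P xp - P x)‖ ≤ rh * ‖xp - x‖ :=
            mul_le_mul_of_nonneg_left hle (le_of_lt hrh0)
        _ ≤ M * ‖xp - x‖ := mul_le_mul_of_nonneg_right hMrh (norm_nonneg _)
    · have hsle : (rh - ρ) * ‖P xp - P x‖ ≤ rh * ‖xp - x‖ := by
        rcases eq_or_lt_of_le (norm_nonneg (P xp - P x)) with h0 | h0
        · rw [← h0]
          have : (0:ℝ) ≤ rh * ‖xp - x‖ := mul_nonneg (le_of_lt hrh0) (norm_nonneg _)
          linarith
        · have hx1 : (rh - ρ) * ‖P xp - P x‖ ^ 2 ≤ rh * (‖P xp - P x‖ * ‖xp - x‖) := by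
            refine le_trans hmono ?_
            exact mul_le_mul_of_nonneg_left hCS (le_of_lt hrh0)
          have hx2 : ((rh - ρ) * ‖P xp - P x‖) * ‖P xp - P x‖
              ≤ (rh * ‖xp - x‖) * ‖P xp - P x‖ := by
            have e1 : ((rh - ρ) * ‖P xp - P x‖) * ‖P xp - P x‖
                = (rh - ρ) * ‖P xp - P x‖ ^ 2 := by ring
            have e2 : (rh * ‖xp - x‖) * ‖P xp - P x‖
                = rh * (‖P xp - P x‖ * ‖xp - x‖) := by ring
            rw [e1, e2]; exact hx1
          exact le_of_mul_le_mul_right hx2 h0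
      have hs2 : ((rh - ρ) * ‖P xp - P x‖) * ((rh - ρ) * ‖P xp - P x‖) ≤ (rh * ‖xp - x‖) * (rh * ‖xp - x‖) :=
        mul_le_mul hsle hsle (mul_nonneg (by linarith) (norm_nonneg _))
          (mul_nonneg (le_of_lt hrh0) (norm_nonneg _))
      have hA : 2*rh*(rh-ρ)^2 * ((rh - ρ) * ‖P xp - P x‖ ^ 2) ≤ 2*rh*(rh-ρ)^2 * (rh * ⟪P xp - P x, xp - x⟫) := by
        exact mul_le_mul_of_nonneg_left hmono
          (mul_nonneg (mul_nonneg (by norm_num) (le_of_lt hrh0)) (sq_nonneg _))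
      have hB : (rh*(2*ρ-rh)) * (((rh - ρ) * ‖P xp - P x‖) * ((rh - ρ) * ‖P xp - P x‖))
          ≤ (rh*(2*ρ-rh)) * ((rh * ‖xp - x‖) * (rh * ‖xp - x‖)) := by
        exact mul_le_mul_of_nonneg_left hs2
          (mul_nonneg (le_of_lt hrh0) (by linarith))
      have hsq : (rh * ‖(xp - x) - (P xp - P x)‖) ^ 2 ≤ (ρ * rh / (rh - ρ) * ‖xp - x‖) ^ 2 := by
        rw [div_mul_eq_mul_div, div_pow, le_div_iff₀ (pow_pos (by linarith : (0:ℝ) < rh - ρ) 2),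
          mul_pow, hnsq]
        linarith only [hA, hB]
      have hsqrt : rh * ‖(xp - x) - (P xp - P x)‖ ≤ ρ * rh / (rh - ρ) * ‖xp - x‖ := by
        have rnn : 0 ≤ ρ * rh / (rh - ρ) * ‖xp - x‖ :=
          mul_nonneg (div_nonneg (by positivity) (by linarith)) (norm_nonneg _)
        calc rh * ‖(xp - x) - (P xp - P x)‖ = Real.sqrt ((rh * ‖(xp - x) - (P xp - P x)‖) ^ 2) :=
              (Real.sqrt_sq (mul_nonneg (le_of_lt hrh0) (norm_nonneg _))).symm
          _ ≤ Real.sqrt ((ρ * rh / (rh - ρ) * ‖xp - x‖) ^ 2) := Real.sqrt_le_sqrt hsq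
          _ = ρ * rh / (rh - ρ) * ‖xp - x‖ := Real.sqrt_sq rnn
      exact le_trans hsqrt (mul_le_mul_of_nonneg_right hM2 (norm_nonneg _))
  -- final assembly
  have hwx : ‖xp - x‖ = α * ‖y - x‖ := by
    have hws : xp - x = α • (y - x) := by rw [hxp]; module
    rw [hws, norm_smul, Real.norm_eq_abs, abs_of_pos hα0]
  have hnorm : ‖rh • (xp - P xp)‖ = rh * ‖xp - P xp‖ := by
    rw [norm_smul, Real.norm_eq_abs, abs_of_pos hrh0]
  have htri : ‖xp - P xp‖ ≤ ‖(xp - x) - (P xp - P x)‖ + ‖x - P x‖ := by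
    have h := norm_add_le ((xp - x) - (P xp - P x)) (x - P x)
    have he : ((xp - x) - (P xp - P x)) + (x - P x) = xp - P xp := by abel
    rw [he] at h; exact h
  rw [hnorm]
  have hfin1 : rh * ‖xp - P xp‖ ≤ M * ‖xp - x‖ + rh * (1 / (1 - r1)) * ‖y - x‖ := by
    have t1 := mul_le_mul_of_nonneg_left htri (le_of_lt hrh0)
    have t2 := mul_le_mul_of_nonneg_left hi5 (le_of_lt hrh0)
    linarith only [t1, t2, hLip]
  have heq2 : rh * (1 / (1 - r1)) * ‖y - x‖ = rh / α * (1 / (1 - r1)) * ‖xp - x‖ := by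
    rw [hwx]; field_simp
  linarith only [hfin1, heq2]
end

section
/- Let f : ℝ^d → ℝ be ρ-weakly convex, continuous, and bounded below, with ρ, η, β > 0. Suppose that for each x ∈ ℝ^d there is a continuous η-weakly convex model f_x : ℝ^d → ℝ with |f(y) − f_x(y)| ≤ (β/2)‖y − x‖² for all y. Let τ > max{η, 2ρ, (4β + ρ + η)/2}, set ρ̂ = τ/2 + (ρ + η)/4, and fix α ∈ (0, 1]. Define a sequence by choosing x₀ ∈ ℝ^d and, for each t ≥ 0, letting y_t be the unique minimizer of z ↦ f_{x_t}(z) + (τ/2)‖z − x_t‖² and x_{t+1} = (1 − α)x_t + α y_t. Denote by P(u) the unique minimizer of z ↦ f(z) + (ρ̂/2)‖z − u‖² and by F(u) = f(P(u)) + (ρ̂/2)‖P(u) − u‖² the Moreau envelope. Then for every T ≥ 0: min_{t = 0,…,T} ‖ρ̂(x_t − P(x_t))‖ ≤ √( (F(x₀) − inf f) / ( (α(2ρ̂ − ρ − η − β)/(2ρ̂(ρ̂ + τ − ρ − η)))·(T + 1) ) ). -/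
open Set Filter Topology

/-!
Write `p = P xₜ`. The proximal subproblem of `f` is `(ρ̂ - ρ)`-strongly convex and the model
subproblem `(τ - η)`-strongly convex, so both grow quadratically away from their minimizers `p`
and `yₜ`. Adding the two growth inequalities to the model error bounds at `p` and `yₜ` gives
`(ρ̂ + τ - ρ - η)‖p - yₜ‖² ≤ (τ + β - ρ̂)‖p - xₜ‖²`: the model step lands strictly closer to `p`.
Evaluating the envelope at `xₜ₊₁` at the test point `p` and expanding `‖p - xₜ₊₁‖²` along the
relaxation gives `F(xₜ₊₁) ≤ F(xₜ) - c‖ρ̂(xₜ - p)‖²`; telescoping with `F ≥ inf f` bounds the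
smallest of these gradients.
-/

section InnerProductSpace

variable {E : Type*} [NormedAddCommGroup E] [InnerProductSpace ℝ E]

lemma norm_smul_add_smul_sub_sq (a : ℝ) (u v p : E) :
    ‖(1 - a) • u + a • v - p‖ ^ 2
      = (1 - a) * ‖u - p‖ ^ 2 + a * ‖v - p‖ ^ 2 - a * (1 - a) * ‖v - u‖ ^ 2 := by
  simp only [← real_inner_self_eq_norm_sq, inner_sub_left, inner_sub_right, inner_add_left,
    inner_add_right, real_inner_smul_left, real_inner_smul_right, real_inner_comm u v,
    real_inner_comm u p, real_inner_comm v p]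
  ring

lemma strongConvexOn_add_sq_norm_sub {g : E → ℝ} {s : ℝ} (m : ℝ) (c : E)
    (hg : ConvexOn ℝ univ fun z => g z + s / 2 * ‖z‖ ^ 2) :
    StrongConvexOn univ (m - s) fun z => g z + m / 2 * ‖z - c‖ ^ 2 := by
  rw [strongConvexOn_iff_convex]
  have hlin : ConvexOn ℝ univ fun z => ((-m) • innerSL ℝ c) z :=
    ((-m) • innerSL ℝ c).toLinearMap.convexOn convex_univ
  refine ((hg.add hlin).add_const (m / 2 * ‖c‖ ^ 2)).congr fun z _ => ?_
  simp only [FunLike.coe_smul, Pi.smul_apply, innerSL_apply_apply, smul_eq_mul, Pi.add_apply,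
    norm_sub_sq_real, real_inner_comm z c]
  ring

end InnerProductSpace

lemma StrongConvexOn.add_sq_le_of_isMinOn {E : Type*} [NormedAddCommGroup E] [NormedSpace ℝ E]
    {s : Set E} {μ : ℝ} {h : E → ℝ} {w z : E} (hh : StrongConvexOn s μ h) (hws : w ∈ s)
    (hw : IsMinOn h s w) (hzs : z ∈ s) :
    h w + μ / 2 * ‖z - w‖ ^ 2 ≤ h z := by
  have hseg : ∀ a ∈ Ioo (0 : ℝ) 1, h w + (1 - a) * (μ / 2 * ‖z - w‖ ^ 2) ≤ h z := by
    rintro a ⟨ha0, ha1⟩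
    have hconv : h ((1 - a) • w + a • z)
        ≤ (1 - a) * h w + a * h z - (1 - a) * a * (μ / 2 * ‖z - w‖ ^ 2) := by
      simpa only [smul_eq_mul, norm_sub_rev w z] using
        hh.2 hws hzs (sub_nonneg.2 ha1.le) ha0.le (sub_add_cancel 1 a)
    have hmin : h w ≤ h ((1 - a) • w + a • z) :=
      hw (hh.1 hws hzs (sub_nonneg.2 ha1.le) ha0.le (sub_add_cancel 1 a))
    have : a * (h w + (1 - a) * (μ / 2 * ‖z - w‖ ^ 2)) ≤ a * h z := by linarith
    exact le_of_mul_le_mul_left this ha0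
  have hlim : Tendsto (fun a : ℝ => h w + (1 - a) * (μ / 2 * ‖z - w‖ ^ 2)) (𝓝[>] 0)
      (𝓝 (h w + (1 - 0) * (μ / 2 * ‖z - w‖ ^ 2))) :=
    (Continuous.tendsto (by fun_prop) 0).mono_left nhdsWithin_le_nhds
  rw [sub_zero, one_mul] at hlim
  exact le_of_tendsto hlim (mem_of_superset (Ioo_mem_nhdsGT one_pos) hseg)

lemma exists_le_sqrt_div_of_descent {F g : ℕ → ℝ} {c m : ℝ} (hc : 0 < c)
    (hdesc : ∀ t, c * g t ^ 2 ≤ F t - F (t + 1)) (hlow : ∀ t, m ≤ F t) (T : ℕ) :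
    ∃ t ≤ T, g t ≤ √((F 0 - m) / (c * (T + 1))) := by
  obtain ⟨t, ht, hmin⟩ := Finset.exists_min_image (Finset.range (T + 1)) (fun t => g t ^ 2)
    Finset.nonempty_range_add_one
  refine ⟨t, Nat.lt_succ_iff.1 (Finset.mem_range.1 ht), Real.le_sqrt_of_sq_le ?_⟩
  rw [le_div_iff₀ (by positivity)]
  calc g t ^ 2 * (c * (T + 1)) = ∑ _ ∈ Finset.range (T + 1), c * g t ^ 2 := by
        simp only [Finset.sum_const, Finset.card_range, nsmul_eq_mul]; push_cast; ring
    _ ≤ ∑ k ∈ Finset.range (T + 1), (F k - F (k + 1)) :=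
        Finset.sum_le_sum fun k hk =>
          (mul_le_mul_of_nonneg_left (hmin k hk) hc.le).trans (hdesc k)
    _ = F 0 - F (T + 1) := Finset.sum_range_sub' F (T + 1)
    _ ≤ F 0 - m := sub_le_sub_left (hlow _) _

section ModelBasedStep

variable {E : Type*} [NormedAddCommGroup E] [InnerProductSpace ℝ E]
  {f m : E → ℝ} {ρ η β τ rh : ℝ} {x y p : E}

lemma norm_sq_prox_sub_model_step_le
    (hf : ConvexOn ℝ univ fun z => f z + ρ / 2 * ‖z‖ ^ 2)
    (hm : ConvexOn ℝ univ fun z => m z + η / 2 * ‖z‖ ^ 2)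
    (happrox : ∀ z, |f z - m z| ≤ β / 2 * ‖z - x‖ ^ 2) (hτ : rh + β ≤ τ)
    (hp : ∀ z, f p + rh / 2 * ‖p - x‖ ^ 2 ≤ f z + rh / 2 * ‖z - x‖ ^ 2)
    (hy : ∀ z, m y + τ / 2 * ‖y - x‖ ^ 2 ≤ m z + τ / 2 * ‖z - x‖ ^ 2) :
    (rh + τ - ρ - η) * ‖p - y‖ ^ 2 ≤ (τ + β - rh) * ‖p - x‖ ^ 2 := by
  have hp_growth : f p + rh / 2 * ‖p - x‖ ^ 2 + (rh - ρ) / 2 * ‖y - p‖ ^ 2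
      ≤ f y + rh / 2 * ‖y - x‖ ^ 2 :=
    (strongConvexOn_add_sq_norm_sub rh x hf).add_sq_le_of_isMinOn (mem_univ p)
      (fun z _ => hp z) (mem_univ y)
  have hy_growth : m y + τ / 2 * ‖y - x‖ ^ 2 + (τ - η) / 2 * ‖p - y‖ ^ 2
      ≤ m p + τ / 2 * ‖p - x‖ ^ 2 :=
    (strongConvexOn_add_sq_norm_sub τ x hm).add_sq_le_of_isMinOn (mem_univ y)
      (fun z _ => hy z) (mem_univ p)
  have happrox_p := (abs_le.1 (happrox p)).1
  have happrox_y := (abs_le.1 (happrox y)).2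
  have hyx : (rh + β - τ) * ‖y - x‖ ^ 2 ≤ 0 :=
    mul_nonpos_of_nonpos_of_nonneg (by linarith) (sq_nonneg _)
  rw [norm_sub_rev y p] at hp_growth
  linarith

lemma moreau_envelope_descent_of_model_step {α : ℝ} {x' p' : E} (hα : α ∈ Icc (0 : ℝ) 1)
    (hrh : 0 < rh) (hD : 0 < rh + τ - ρ - η)
    (hf : ConvexOn ℝ univ fun z => f z + ρ / 2 * ‖z‖ ^ 2)
    (hm : ConvexOn ℝ univ fun z => m z + η / 2 * ‖z‖ ^ 2)
    (happrox : ∀ z, |f z - m z| ≤ β / 2 * ‖z - x‖ ^ 2) (hτ : rh + β ≤ τ)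
    (hp : ∀ z, f p + rh / 2 * ‖p - x‖ ^ 2 ≤ f z + rh / 2 * ‖z - x‖ ^ 2)
    (hy : ∀ z, m y + τ / 2 * ‖y - x‖ ^ 2 ≤ m z + τ / 2 * ‖z - x‖ ^ 2)
    (hx' : x' = (1 - α) • x + α • y)
    (hp' : f p' + rh / 2 * ‖p' - x'‖ ^ 2 ≤ f p + rh / 2 * ‖p - x'‖ ^ 2) :
    α * (2 * rh - ρ - η - β) / (2 * rh * (rh + τ - ρ - η)) * ‖rh • (x - p)‖ ^ 2
      ≤ (f p + rh / 2 * ‖p - x‖ ^ 2) - (f p' + rh / 2 * ‖p' - x'‖ ^ 2) := by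
  obtain ⟨hα0, hα1⟩ := hα
  have hstep := norm_sq_prox_sub_model_step_le hf hm happrox hτ hp hy
  have hrelax : ‖p - x'‖ ^ 2
      = (1 - α) * ‖p - x‖ ^ 2 + α * ‖p - y‖ ^ 2 - α * (1 - α) * ‖y - x‖ ^ 2 := by
    rw [norm_sub_rev, hx', norm_smul_add_smul_sub_sq, norm_sub_rev x, norm_sub_rev y]
  have hgrad : ‖rh • (x - p)‖ ^ 2 = rh ^ 2 * ‖p - x‖ ^ 2 := by
    rw [norm_smul, Real.norm_of_nonneg hrh.le, norm_sub_rev, mul_pow]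
  have hyx : 0 ≤ α * (1 - α) * ‖y - x‖ ^ 2 := by
    have : 0 ≤ 1 - α := sub_nonneg.2 hα1
    positivity
  have hgap : (2 * rh - ρ - η - β) * ‖p - x‖ ^ 2
      ≤ (rh + τ - ρ - η) * (‖p - x‖ ^ 2 - ‖p - y‖ ^ 2) := by linarith
  rw [hrelax] at hp'
  rw [hgrad]
  calc α * (2 * rh - ρ - η - β) / (2 * rh * (rh + τ - ρ - η)) * (rh ^ 2 * ‖p - x‖ ^ 2)
      = α * rh / (2 * (rh + τ - ρ - η)) * ((2 * rh - ρ - η - β) * ‖p - x‖ ^ 2) := by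
        field_simp
    _ ≤ α * rh / (2 * (rh + τ - ρ - η)) * ((rh + τ - ρ - η) * (‖p - x‖ ^ 2 - ‖p - y‖ ^ 2)) :=
        mul_le_mul_of_nonneg_left hgap (by positivity)
    _ = α * rh / 2 * (‖p - x‖ ^ 2 - ‖p - y‖ ^ 2) := by field_simp
    _ ≤ (f p + rh / 2 * ‖p - x‖ ^ 2) - (f p' + rh / 2 * ‖p' - x'‖ ^ 2) := by
        linarith [mul_nonneg hrh.le hyx]

end ModelBasedStep

theorem model_based_gradient_rate_general {d : ℕ}
    (f : EuclideanSpace ℝ (Fin d) → ℝ)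
    (ρ η β : ℝ) (hρ : 0 < ρ) (hη : 0 < η)
    (hfwc : ConvexOn ℝ Set.univ (fun z => f z + ρ / 2 * ‖z‖ ^ 2))
    (hbdd : BddBelow (Set.range f))
    (model : EuclideanSpace ℝ (Fin d) → EuclideanSpace ℝ (Fin d) → ℝ)
    (hmwc : ∀ x, ConvexOn ℝ Set.univ (fun z => model x z + η / 2 * ‖z‖ ^ 2))
    (happrox : ∀ x y, |f y - model x y| ≤ β / 2 * ‖y - x‖ ^ 2)
    (τ : ℝ) (hτ : τ > max η (max (2 * ρ) ((4 * β + ρ + η) / 2)))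
    (rh : ℝ) (hrh : rh = τ / 2 + (ρ + η) / 4)
    (α : ℝ) (hα : α ∈ Set.Ioc (0 : ℝ) 1)
    (P : EuclideanSpace ℝ (Fin d) → EuclideanSpace ℝ (Fin d))
    (hP : ∀ u z, f (P u) + rh / 2 * ‖P u - u‖ ^ 2 ≤ f z + rh / 2 * ‖z - u‖ ^ 2)
    (x y : ℕ → EuclideanSpace ℝ (Fin d))
    (hy : ∀ t, ∀ z, model (x t) (y t) + τ / 2 * ‖y t - x t‖ ^ 2 ≤
      model (x t) z + τ / 2 * ‖z - x t‖ ^ 2)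
    (hx : ∀ t, x (t + 1) = (1 - α) • x t + α • y t) :
    ∀ T : ℕ, ∃ t ≤ T, ‖rh • (x t - P (x t))‖ ≤
      Real.sqrt (((f (P (x 0)) + rh / 2 * ‖P (x 0) - x 0‖ ^ 2) - (⨅ z, f z)) /
        (α * (2 * rh - ρ - η - β) / (2 * rh * (rh + τ - ρ - η)) * (T + 1))) := by
  simp only [gt_iff_lt, max_lt_iff] at hτ
  obtain ⟨hτη, hτρ, hτβ⟩ := hτ
  have hrh0 : 0 < rh := by linarith
  have hD : 0 < rh + τ - ρ - η := by linarith
  have hK : 0 < 2 * rh - ρ - η - β := by linarith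
  have hc : 0 < α * (2 * rh - ρ - η - β) / (2 * rh * (rh + τ - ρ - η)) := by
    have := hα.1
    positivity
  refine exists_le_sqrt_div_of_descent
    (F := fun t => f (P (x t)) + rh / 2 * ‖P (x t) - x t‖ ^ 2) hc (fun t => ?_) (fun t => ?_)
  · exact moreau_envelope_descent_of_model_step (Ioc_subset_Icc_self hα) hrh0 hD hfwc
      (hmwc (x t)) (happrox (x t)) (by linarith) (hP (x t)) (hy t) (hx t) (hP _ _)
  · exact (ciInf_le hbdd _).trans (le_add_of_nonneg_right (by positivity))

/-- Rate of decrease of the Moreau envelope gradient: For the relaxed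
model-based algorithm `x_{t+1} = (1 − α)x_t + α y_t` (with `y_t` minimizing the model
subproblem at `x_t`), with `f` bounded below, `τ > max{η, 2ρ, (4β + ρ + η)/2}`,
`ρ̂ = τ/2 + (ρ + η)/4`, `α ∈ (0,1]`, `P u` the proximal point at `u`, and
`F(u) = f(P u) + (ρ̂/2)‖P u − u‖²` the Moreau envelope, we have for every `T`:
`min_{t ≤ T} ‖ρ̂(x_t − P x_t)‖ ≤ √((F(x₀) − inf f)/(c(T+1)))`
where `c = α(2ρ̂ − ρ − η − β)/(2ρ̂(ρ̂ + τ − ρ − η))`. -/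
theorem model_based_gradient_rate {d : ℕ}
    (f : EuclideanSpace ℝ (Fin d) → ℝ)
    (ρ η β : ℝ) (hρ : 0 < ρ) (hη : 0 < η) (hβ : 0 < β)
    (hfwc : ConvexOn ℝ Set.univ (fun z => f z + ρ / 2 * ‖z‖ ^ 2))
    (hf : Continuous f) (hbdd : BddBelow (Set.range f))
    (model : EuclideanSpace ℝ (Fin d) → EuclideanSpace ℝ (Fin d) → ℝ)
    (hmwc : ∀ x, ConvexOn ℝ Set.univ (fun z => model x z + η / 2 * ‖z‖ ^ 2))
    (hmcont : ∀ x, Continuous (model x))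
    (happrox : ∀ x y, |f y - model x y| ≤ β / 2 * ‖y - x‖ ^ 2)
    (τ : ℝ) (hτ : τ > max η (max (2 * ρ) ((4 * β + ρ + η) / 2)))
    (rh : ℝ) (hrh : rh = τ / 2 + (ρ + η) / 4)
    (α : ℝ) (hα : α ∈ Set.Ioc (0 : ℝ) 1)
    (P : EuclideanSpace ℝ (Fin d) → EuclideanSpace ℝ (Fin d))
    (hP : ∀ u z, f (P u) + rh / 2 * ‖P u - u‖ ^ 2 ≤ f z + rh / 2 * ‖z - u‖ ^ 2)
    (x y : ℕ → EuclideanSpace ℝ (Fin d))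
    (hy : ∀ t, ∀ z, model (x t) (y t) + τ / 2 * ‖y t - x t‖ ^ 2 ≤
      model (x t) z + τ / 2 * ‖z - x t‖ ^ 2)
    (hx : ∀ t, x (t + 1) = (1 - α) • x t + α • y t) :
    ∀ T : ℕ, ∃ t ≤ T, ‖rh • (x t - P (x t))‖ ≤
      Real.sqrt (((f (P (x 0)) + rh / 2 * ‖P (x 0) - x 0‖ ^ 2) - (⨅ z, f z)) /
        (α * (2 * rh - ρ - η - β) / (2 * rh * (rh + τ - ρ - η)) * (T + 1))) :=
  model_based_gradient_rate_general f ρ η β hρ hη hfwc hbdd model hmwc happrox τ hτ rh hrh α hα P hP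
    x y hy hx
end

section
/- Fix real numbers λ > ρ > 0 and define f : ℝ² → ℝ by f(x, y) = (1/2)(|x| + |y|)² − (ρ/2)x². Then for every (x, y) ∈ ℝ², the function (u, v) ↦ f(u, v) + (λ/2)((u − x)² + (v − y)²) has a unique minimizer S(x, y), given by the following piecewise formula: S(0,0) = (0,0); if |x| ≤ |y|/(1 + λ) then S(x, y) = (0, (λ/(1 + λ)) y); if |y| ≤ |x|/(1 + λ − ρ) then S(x, y) = ((λ/(1 + λ − ρ)) x, 0); if |x|/(1 + λ − ρ) < |y| < (1 + λ)|x| and sign(x) = sign(y), then S(x, y) = (λ/((1 + λ)(1 + λ − ρ) − 1))·((1 + λ)x − y, −x + (1 + λ − ρ)y); and if |x|/(1 + λ − ρ) < |y| < (1 + λ)|x| and sign(x) ≠ sign(y), then S(x, y) = (λ/((1 + λ)(1 + λ − ρ) − 1))·((1 + λ)x + y, x + (1 + λ − ρ)y). That is, prox_{(1/λ)f}(x, y) = S(x, y). -/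
open Set Filter Topology

/-- The pathological function `f(x, y) = (1/2)(|x| + |y|)² − (ρ/2)x²` on the plane. -/
noncomputable def pathologicalFun (ρ : ℝ) (p : ℝ × ℝ) : ℝ :=
  1 / 2 * (|p.1| + |p.2|) ^ 2 - ρ / 2 * p.1 ^ 2

/-- The explicit piecewise formula for the proximal map `prox_{(1/λ)f}` of the pathological
function, from Theorem B.1 of the paper (`sign(x) = sign(y)` is expressed as `x·y > 0` on the
middle region where both coordinates are nonzero). -/
noncomputable def pathologicalProx (lam ρ : ℝ) (p : ℝ × ℝ) : ℝ × ℝ :=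
  if p = (0, 0) then (0, 0)
  else if |p.1| ≤ |p.2| / (1 + lam) then (0, lam / (1 + lam) * p.2)
  else if |p.2| ≤ |p.1| / (1 + lam - ρ) then (lam / (1 + lam - ρ) * p.1, 0)
  else if p.1 * p.2 > 0 then
    (lam / ((1 + lam) * (1 + lam - ρ) - 1) * ((1 + lam) * p.1 - p.2),
     lam / ((1 + lam) * (1 + lam - ρ) - 1) * (-p.1 + (1 + lam - ρ) * p.2))
  else
    (lam / ((1 + lam) * (1 + lam - ρ) - 1) * ((1 + lam) * p.1 + p.2),
     lam / ((1 + lam) * (1 + lam - ρ) - 1) * (p.1 + (1 + lam - ρ) * p.2))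

noncomputable def Gq (lam ρ X Y u v : ℝ) : ℝ :=
  1/2*(u+v)^2 - ρ/2*u^2 + lam/2*((u-X)^2+(v-Y)^2)

noncomputable def Fobj (lam ρ : ℝ) (p w : ℝ × ℝ) : ℝ :=
  pathologicalFun ρ w + lam / 2 * ((w.1 - p.1) ^ 2 + (w.2 - p.2) ^ 2)

lemma G1 (lam ρ X Y u v V : ℝ) (hρ : 0 < ρ) (hlam : ρ < lam)
    (hu : 0 ≤ u)
    (hXY : (1+lam)*X ≤ Y) (hV : (1+lam)*V = lam*Y) :
    Gq lam ρ X Y 0 V ≤ Gq lam ρ X Y u v := by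
  have ha : (0:ℝ) < 1 + lam := by linarith
  have hgrad : lam*X ≤ V := by nlinarith
  have key : 2*(Gq lam ρ X Y u v - Gq lam ρ X Y 0 V) =
      2*(V - lam*X)*u + (1+lam-ρ)*u^2 + 2*u*(v-V) + (1+lam)*(v-V)^2 := by
    unfold Gq; linear_combination (2*v - 2*V)*hV
  nlinarith [sq_nonneg (u+(v-V)), mul_nonneg (sub_nonneg.2 hgrad) hu,
    mul_nonneg (sq_nonneg u) (sub_pos.2 hlam).le, mul_nonneg (sq_nonneg (v-V)) (hρ.trans hlam).le]

lemma G2 (lam ρ X Y u v U : ℝ) (hρ : 0 < ρ) (hlam : ρ < lam)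
    (hv : 0 ≤ v)
    (hXY : (1+lam-ρ)*Y ≤ X) (hU : (1+lam-ρ)*U = lam*X) :
    Gq lam ρ X Y U 0 ≤ Gq lam ρ X Y u v := by
  have hb : (0:ℝ) < 1 + lam - ρ := by linarith
  have hgrad : lam*Y ≤ U := by nlinarith
  have key : 2*(Gq lam ρ X Y u v - Gq lam ρ X Y U 0) =
      2*(U - lam*Y)*v + (1+lam-ρ)*(u-U)^2 + 2*(u-U)*v + (1+lam)*v^2 := by
    unfold Gq; linear_combination (2*u - 2*U)*hU
  nlinarith [sq_nonneg ((u-U)+v), mul_nonneg (sub_nonneg.2 hgrad) hv,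
    mul_nonneg (sq_nonneg (u-U)) (sub_pos.2 hlam).le, mul_nonneg (sq_nonneg v) (hρ.trans hlam).le]

lemma G3 (lam ρ X Y u v U V : ℝ) (hρ : 0 < ρ) (hlam : ρ < lam)
    (hU : ((1+lam)*(1+lam-ρ)-1)*U = lam*((1+lam)*X - Y))
    (hV : ((1+lam)*(1+lam-ρ)-1)*V = lam*(-X + (1+lam-ρ)*Y)) :
    Gq lam ρ X Y U V ≤ Gq lam ρ X Y u v := by
  have hD : (0:ℝ) < (1+lam)*(1+lam-ρ)-1 := by nlinarith
  have hgu : (1+lam-ρ)*U + V = lam*X := by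
    have h : ((1+lam)*(1+lam-ρ)-1) * ((1+lam-ρ)*U + V) = ((1+lam)*(1+lam-ρ)-1) * (lam*X) := by
      linear_combination (1+lam-ρ)*hU + hV
    exact mul_left_cancel₀ hD.ne' h
  have hgv : U + (1+lam)*V = lam*Y := by
    have h : ((1+lam)*(1+lam-ρ)-1) * (U + (1+lam)*V) = ((1+lam)*(1+lam-ρ)-1) * (lam*Y) := by
      linear_combination hU + (1+lam)*hV
    exact mul_left_cancel₀ hD.ne' h
  have key : 2*(Gq lam ρ X Y u v - Gq lam ρ X Y U V) =
      (1+lam-ρ)*(u-U)^2 + 2*(u-U)*(v-V) + (1+lam)*(v-V)^2 := by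
    unfold Gq; linear_combination (2*u - 2*U)*hgu + (2*v - 2*V)*hgv
  nlinarith [sq_nonneg ((u-U)+(v-V)),
    mul_nonneg (sq_nonneg (u-U)) (sub_pos.2 hlam).le, mul_nonneg (sq_nonneg (v-V)) (hρ.trans hlam).le]

lemma F_ge_G (lam ρ : ℝ) (hlam : 0 < lam) (p w : ℝ × ℝ) :
    Gq lam ρ |p.1| |p.2| |w.1| |w.2| ≤ Fobj lam ρ p w := by
  have h1 : w.1 * p.1 ≤ |w.1| * |p.1| := by rw [← abs_mul]; exact le_abs_self _
  have h2 : w.2 * p.2 ≤ |w.2| * |p.2| := by rw [← abs_mul]; exact le_abs_self _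
  have e : Fobj lam ρ p w - Gq lam ρ |p.1| |p.2| |w.1| |w.2| =
      lam * (|w.1| * |p.1| - w.1 * p.1) + lam * (|w.2| * |p.2| - w.2 * p.2) := by
    unfold Gq Fobj pathologicalFun
    linear_combination (ρ/2 - lam/2)*sq_abs w.1 + (-lam/2)*sq_abs p.1
      + (-lam/2)*sq_abs w.2 + (-lam/2)*sq_abs p.2
  nlinarith [mul_nonneg hlam.le (sub_nonneg.2 h1), mul_nonneg hlam.le (sub_nonneg.2 h2)]

lemma F_eq_G (lam ρ : ℝ) (p w : ℝ × ℝ) (h1 : 0 ≤ w.1 * p.1) (h2 : 0 ≤ w.2 * p.2) :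
    Fobj lam ρ p w = Gq lam ρ |p.1| |p.2| |w.1| |w.2| := by
  have e1 : w.1 * p.1 = |w.1| * |p.1| := by rw [← abs_mul]; exact (abs_of_nonneg h1).symm
  have e2 : w.2 * p.2 = |w.2| * |p.2| := by rw [← abs_mul]; exact (abs_of_nonneg h2).symm
  unfold Gq Fobj pathologicalFun
  linear_combination (-lam)*e1 + (-lam)*e2 + (ρ/2 - lam/2)*sq_abs w.1
    + (-lam/2)*sq_abs p.1 + (-lam/2)*sq_abs w.2 + (-lam/2)*sq_abs p.2

lemma midineq (lam ρ : ℝ) (hρ : 0 < ρ) (p q s : ℝ × ℝ) :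
    Fobj lam ρ p ((q.1+s.1)/2, (q.2+s.2)/2) ≤
      (Fobj lam ρ p q + Fobj lam ρ p s)/2
        - (lam-ρ)/8 * ((q.1-s.1)^2 + (q.2-s.2)^2) := by
  have ht : |(q.1+s.1)/2| + |(q.2+s.2)/2| ≤ (|q.1|+|q.2|+|s.1|+|s.2|)/2 := by
    have := abs_add_le q.1 s.1
    have := abs_add_le q.2 s.2
    calc |(q.1+s.1)/2| + |(q.2+s.2)/2| = |q.1+s.1|/2 + |q.2+s.2|/2 := by
          rw [abs_div, abs_div]; norm_num
      _ ≤ _ := by linarith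
  have h0 : (0:ℝ) ≤ |(q.1+s.1)/2| + |(q.2+s.2)/2| := by positivity
  have hsq : (|(q.1+s.1)/2| + |(q.2+s.2)/2|)^2 ≤ ((|q.1|+|q.2|+|s.1|+|s.2|)/2)^2 :=
    pow_le_pow_left₀ h0 ht 2
  unfold Fobj pathologicalFun
  simp only
  nlinarith [hsq, sq_nonneg ((|q.1|+|q.2|) - (|s.1|+|s.2|)),
    mul_nonneg hρ.le (sq_nonneg (q.2-s.2))]

lemma prox_min (lam ρ : ℝ) (hρ : 0 < ρ) (hlam : ρ < lam) (p w : ℝ × ℝ) :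
    Fobj lam ρ p (pathologicalProx lam ρ p) ≤ Fobj lam ρ p w := by
  obtain ⟨x, y⟩ := p
  have hlam0 : (0:ℝ) < lam := hρ.trans hlam
  have ha : (0:ℝ) < 1 + lam := by linarith
  have hb : (0:ℝ) < 1 + lam - ρ := by linarith
  have hD : (0:ℝ) < (1+lam)*(1+lam-ρ)-1 := by nlinarith
  have hge := F_ge_G lam ρ hlam0 (x, y) w
  simp only at hge
  rw [pathologicalProx]
  simp only
  split_ifs with h0 h1 h2 h3
  · -- p = (0,0)
    rw [Prod.mk.injEq] at h0
    obtain ⟨rfl, rfl⟩ := h0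
    refine le_trans ?_ hge
    rw [F_eq_G lam ρ (0,0) (0,0) (by norm_num) (by norm_num)]
    simp only [abs_zero]
    exact G1 lam ρ 0 0 |w.1| |w.2| 0 hρ hlam (abs_nonneg _) (by norm_num) (by ring)
  · -- |x| ≤ |y|/(1+lam)
    rw [le_div_iff₀ ha] at h1
    have hs2 : (0:ℝ) ≤ (lam / (1 + lam) * y) * y := by
      rw [mul_assoc]; exact mul_nonneg (by positivity) (mul_self_nonneg y)
    refine le_trans ?_ hge
    rw [F_eq_G lam ρ (x,y) (0, lam / (1 + lam) * y) (by norm_num) hs2]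
    simp only [abs_zero]
    refine G1 lam ρ |x| |y| |w.1| |w.2| _ hρ hlam (abs_nonneg _) (by linarith) ?_
    rw [abs_mul, abs_of_pos (show (0:ℝ) < lam/(1+lam) by positivity)]
    field_simp
  · -- |y| ≤ |x|/(1+lam-ρ)
    rw [le_div_iff₀ hb] at h2
    have hs1 : (0:ℝ) ≤ (lam / (1 + lam - ρ) * x) * x := by
      rw [mul_assoc]; exact mul_nonneg (by positivity) (mul_self_nonneg x)
    refine le_trans ?_ hge
    rw [F_eq_G lam ρ (x,y) (lam / (1 + lam - ρ) * x, 0) hs1 (by norm_num)]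
    simp only [abs_zero]
    refine G2 lam ρ |x| |y| |w.1| |w.2| _ hρ hlam (abs_nonneg _) (by linarith) ?_
    rw [abs_mul, abs_of_pos (show (0:ℝ) < lam/(1+lam-ρ) by positivity)]
    field_simp
  · -- interior, same signs
    rw [not_le, div_lt_iff₀ ha] at h1
    rw [not_le, div_lt_iff₀ hb] at h2
    have hc : (0:ℝ) < lam / ((1+lam)*(1+lam-ρ)-1) := by positivity
    rcases mul_pos_iff.1 h3 with ⟨hx, hy⟩ | ⟨hx, hy⟩
    · have hax : |x| = x := abs_of_pos hx
      have hay : |y| = y := abs_of_pos hy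
      have hS1 : (0:ℝ) < lam / ((1+lam)*(1+lam-ρ)-1) * ((1+lam)*x - y) := by
        apply mul_pos hc; nlinarith [abs_of_pos hx ▸ h1, abs_of_pos hy ▸ le_abs_self y]
      have hS2 : (0:ℝ) < lam / ((1+lam)*(1+lam-ρ)-1) * (-x + (1+lam-ρ)*y) := by
        apply mul_pos hc; nlinarith [abs_of_pos hy ▸ h2, abs_of_pos hx ▸ le_abs_self x]
      refine le_trans ?_ hge
      rw [F_eq_G lam ρ (x,y) _ (by exact mul_nonneg hS1.le hx.le) (by exact mul_nonneg hS2.le hy.le)]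
      refine G3 lam ρ |x| |y| |w.1| |w.2| _ _ hρ hlam ?_ ?_
      · rw [show |lam / ((1+lam)*(1+lam-ρ)-1) * ((1+lam)*x - y)| = lam / ((1+lam)*(1+lam-ρ)-1) * ((1+lam)*x - y) from abs_of_pos hS1, hax, hay]
        field_simp
      · rw [show |lam / ((1+lam)*(1+lam-ρ)-1) * (-x + (1+lam-ρ)*y)| = lam / ((1+lam)*(1+lam-ρ)-1) * (-x + (1+lam-ρ)*y) from abs_of_pos hS2, hax, hay]
        field_simp; try ring
    · have hax : |x| = -x := abs_of_neg hx
      have hay : |y| = -y := abs_of_neg hy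
      have hS1 : lam / ((1+lam)*(1+lam-ρ)-1) * ((1+lam)*x - y) < 0 := by
        apply mul_neg_of_pos_of_neg hc; nlinarith [hax ▸ h1]
      have hS2 : lam / ((1+lam)*(1+lam-ρ)-1) * (-x + (1+lam-ρ)*y) < 0 := by
        apply mul_neg_of_pos_of_neg hc; nlinarith [hay ▸ h2]
      refine le_trans ?_ hge
      rw [F_eq_G lam ρ (x,y) _ (by exact (mul_pos_of_neg_of_neg hS1 hx).le) (by exact (mul_pos_of_neg_of_neg hS2 hy).le)]
      refine G3 lam ρ |x| |y| |w.1| |w.2| _ _ hρ hlam ?_ ?_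
      · rw [show |lam / ((1+lam)*(1+lam-ρ)-1) * ((1+lam)*x - y)| = -(lam / ((1+lam)*(1+lam-ρ)-1) * ((1+lam)*x - y)) from abs_of_neg hS1, hax, hay]
        field_simp; try ring
      · rw [show |lam / ((1+lam)*(1+lam-ρ)-1) * (-x + (1+lam-ρ)*y)| = -(lam / ((1+lam)*(1+lam-ρ)-1) * (-x + (1+lam-ρ)*y)) from abs_of_neg hS2, hax, hay]
        field_simp; try ring
  · -- interior, opposite signs
    rw [not_le, div_lt_iff₀ ha] at h1
    rw [not_le, div_lt_iff₀ hb] at h2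
    have hx0 : x ≠ 0 := by
      intro h; rw [h] at h1; simp at h1; nlinarith [abs_nonneg y]
    have hy0 : y ≠ 0 := by
      intro h; rw [h] at h2; simp at h2; nlinarith [abs_nonneg x]
    have hxy : x * y < 0 := lt_of_le_of_ne (not_lt.1 h3) (mul_ne_zero hx0 hy0)
    have hc : (0:ℝ) < lam / ((1+lam)*(1+lam-ρ)-1) := by positivity
    rcases mul_neg_iff.1 hxy with ⟨hx, hy⟩ | ⟨hx, hy⟩
    · have hax : |x| = x := abs_of_pos hx
      have hay : |y| = -y := abs_of_neg hy
      have hS1 : (0:ℝ) < lam / ((1+lam)*(1+lam-ρ)-1) * ((1+lam)*x + y) := by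
        apply mul_pos hc; nlinarith [hax ▸ h1]
      have hS2 : lam / ((1+lam)*(1+lam-ρ)-1) * (x + (1+lam-ρ)*y) < 0 := by
        apply mul_neg_of_pos_of_neg hc; nlinarith [hay ▸ h2]
      refine le_trans ?_ hge
      rw [F_eq_G lam ρ (x,y) _ (by exact mul_nonneg hS1.le hx.le) (by exact (mul_pos_of_neg_of_neg hS2 hy).le)]
      refine G3 lam ρ |x| |y| |w.1| |w.2| _ _ hρ hlam ?_ ?_
      · rw [show |lam / ((1+lam)*(1+lam-ρ)-1) * ((1+lam)*x + y)| = lam / ((1+lam)*(1+lam-ρ)-1) * ((1+lam)*x + y) from abs_of_pos hS1, hax, hay]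
        field_simp; try ring
      · rw [show |lam / ((1+lam)*(1+lam-ρ)-1) * (x + (1+lam-ρ)*y)| = -(lam / ((1+lam)*(1+lam-ρ)-1) * (x + (1+lam-ρ)*y)) from abs_of_neg hS2, hax, hay]
        field_simp; try ring
    · have hax : |x| = -x := abs_of_neg hx
      have hay : |y| = y := abs_of_pos hy
      have hS1 : lam / ((1+lam)*(1+lam-ρ)-1) * ((1+lam)*x + y) < 0 := by
        apply mul_neg_of_pos_of_neg hc; nlinarith [hax ▸ h1]
      have hS2 : (0:ℝ) < lam / ((1+lam)*(1+lam-ρ)-1) * (x + (1+lam-ρ)*y) := by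
        apply mul_pos hc; nlinarith [hay ▸ h2]
      refine le_trans ?_ hge
      rw [F_eq_G lam ρ (x,y) _ (by exact (mul_pos_of_neg_of_neg hS1 hx).le) (by exact mul_nonneg hS2.le hy.le)]
      refine G3 lam ρ |x| |y| |w.1| |w.2| _ _ hρ hlam ?_ ?_
      · rw [show |lam / ((1+lam)*(1+lam-ρ)-1) * ((1+lam)*x + y)| = -(lam / ((1+lam)*(1+lam-ρ)-1) * ((1+lam)*x + y)) from abs_of_neg hS1, hax, hay]
        field_simp; try ring
      · rw [show |lam / ((1+lam)*(1+lam-ρ)-1) * (x + (1+lam-ρ)*y)| = lam / ((1+lam)*(1+lam-ρ)-1) * (x + (1+lam-ρ)*y) from abs_of_pos hS2, hax, hay]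
        field_simp; try ring

/-- For `λ > ρ > 0`, at each `(x, y) ∈ ℝ²` the function
`(u, v) ↦ f(u, v) + (λ/2)((u − x)² + (v − y)²)` has the point given by the piecewise formula
`pathologicalProx lam ρ (x, y)` as its unique minimizer; that is,
`prox_{(1/λ)f}(x, y) = S(x, y)`. -/
theorem pathologicalProx_is_prox (lam ρ : ℝ) (hρ : 0 < ρ) (hlam : ρ < lam) :
    ∀ p : ℝ × ℝ,
      (∀ w : ℝ × ℝ,
        pathologicalFun ρ (pathologicalProx lam ρ p) +
          lam / 2 * (((pathologicalProx lam ρ p).1 - p.1) ^ 2 +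
            ((pathologicalProx lam ρ p).2 - p.2) ^ 2) ≤
        pathologicalFun ρ w + lam / 2 * ((w.1 - p.1) ^ 2 + (w.2 - p.2) ^ 2)) ∧
      (∀ q : ℝ × ℝ,
        (∀ w : ℝ × ℝ,
          pathologicalFun ρ q + lam / 2 * ((q.1 - p.1) ^ 2 + (q.2 - p.2) ^ 2) ≤
          pathologicalFun ρ w + lam / 2 * ((w.1 - p.1) ^ 2 + (w.2 - p.2) ^ 2)) →
        q = pathologicalProx lam ρ p) := by
  intro p
  refine ⟨fun w => prox_min lam ρ hρ hlam p w, fun q hq => ?_⟩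
  have hq' : ∀ w, Fobj lam ρ p q ≤ Fobj lam ρ p w := hq
  have hmin : ∀ w, Fobj lam ρ p (pathologicalProx lam ρ p) ≤ Fobj lam ρ p w :=
    fun w => prox_min lam ρ hρ hlam p w
  set S := pathologicalProx lam ρ p with hS
  have heq : Fobj lam ρ p q = Fobj lam ρ p S := le_antisymm (hq' S) (hmin q)
  have hm := midineq lam ρ hρ p q S
  have h2 := hq' ((q.1+S.1)/2, (q.2+S.2)/2)
  have hpos : 0 < (lam-ρ)/8 := by linarith
  have hprod : (lam-ρ)/8 * ((q.1-S.1)^2 + (q.2-S.2)^2) ≤ 0 := by linarith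
  have hT : (q.1-S.1)^2 + (q.2-S.2)^2 ≤ 0 := by
    nlinarith [sq_nonneg (q.1-S.1), sq_nonneg (q.2-S.2)]
  have e1 : q.1 = S.1 := by nlinarith [sq_nonneg (q.1-S.1), sq_nonneg (q.2-S.2)]
  have e2 : q.2 = S.2 := by nlinarith [sq_nonneg (q.1-S.1), sq_nonneg (q.2-S.2)]
  exact Prod.ext e1 e2
end

section
/- Fix real numbers λ > ρ > 0, let f(x, y) = (1/2)(|x| + |y|)² − (ρ/2)x² on ℝ², and let S(x, y) = prox_{(1/λ)f}(x, y) denote the unique minimizer of (u, v) ↦ f(u, v) + (λ/2)((u − x)² + (v − y)²). Fix α ∈ (0, 1] and define T = (1 − α)I + αS. Then the cone K = { (x, y) ∈ ℝ² : |x| ≤ y/(1 + λ) } satisfies T(K) ⊆ K, and for every (x, y) ∈ K and every k ≥ 0, T^k(x, y) = ((1 − α)^k x, (1 − α/(1 + λ))^k y); in particular the iterates T^k(x, y) converge linearly to the origin as k → ∞. -/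
/-! For `(x, y)` in the cone write `y = (1 + λ) z`, so that `|x| ≤ z`. Comparing the prox objective
`F(w) = f(w) + (λ/2)‖w − (x, y)‖²` at `(u, v)` with its value at `(0, λ z)` gives
`F(u, v) − F(0, λ z) ≥ (1 + λ − ρ)/2 · u² + |u| (v − λ z) + (1 + λ)/2 · (v − λ z)²`, using only
`|v| ≥ v` and `u x ≤ |u| z`; the quadratic form on the right is positive definite because
`(1 + λ − ρ)(1 + λ) > 1`. Hence `S(x, y) = (0, λ y / (1 + λ))`, and on the cone `T` is the diagonal
map with factors `1 − α ≤ 1 − α / (1 + λ) < 1`, which maps the cone into itself. -/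

open Set Filter Topology

noncomputable def proxObjective (f : ℝ × ℝ → ℝ) (lam : ℝ) (p w : ℝ × ℝ) : ℝ :=
  f w + lam / 2 * ((w.1 - p.1) ^ 2 + (w.2 - p.2) ^ 2)

def cone (lam : ℝ) : Set (ℝ × ℝ) := {p | |p.1| ≤ p.2 / (1 + lam)}

lemma eq_zero_of_quadratic_form_nonpos {a b c s d : ℝ} (ha : 0 < a) (hdisc : b ^ 2 < 4 * a * c)
    (h : a * s ^ 2 + b * s * d + c * d ^ 2 ≤ 0) : s = 0 ∧ d = 0 := by
  have hd2 : d ^ 2 ≤ 0 := by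
    refine nonpos_of_mul_nonpos_right ?_ (sub_pos.2 hdisc)
    nlinarith [mul_le_mul_of_nonneg_left h ha.le, sq_nonneg (2 * a * s + b * d)]
  have hd : d = 0 := (pow_eq_zero_iff two_ne_zero).mp (le_antisymm hd2 (sq_nonneg d))
  subst hd
  have hs2 : s ^ 2 ≤ 0 := nonpos_of_mul_nonpos_right (by simpa using h) ha
  exact ⟨(pow_eq_zero_iff two_ne_zero).mp (le_antisymm hs2 (sq_nonneg s)), rfl⟩

lemma proxObjective_pathologicalFun_sub_ge {lam ρ x z : ℝ} (hlam : 0 ≤ lam) (hx : |x| ≤ z)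
    (w : ℝ × ℝ) :
    (1 + lam - ρ) / 2 * |w.1| ^ 2 + |w.1| * (w.2 - lam * z) + (1 + lam) / 2 * (w.2 - lam * z) ^ 2
      ≤ proxObjective (pathologicalFun ρ) lam (x, (1 + lam) * z) w
        - proxObjective (pathologicalFun ρ) lam (x, (1 + lam) * z) (0, lam * z) := by
  obtain ⟨u, v⟩ := w
  have hz : 0 ≤ z := (abs_nonneg x).trans hx
  have hcross : u * x ≤ |u| * z :=
    (le_abs_self _).trans ((abs_mul u x).trans_le (mul_le_mul_of_nonneg_left hx (abs_nonneg u)))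
  have hv : |u| * v ≤ |u| * |v| := mul_le_mul_of_nonneg_left (le_abs_self v) (abs_nonneg u)
  simp only [proxObjective, pathologicalFun, abs_zero, abs_of_nonneg (mul_nonneg hlam hz)]
  linear_combination hv + mul_le_mul_of_nonneg_left hcross hlam + (-1 / 2) * sq_abs v
    + ((lam - ρ) / 2) * sq_abs u

lemma prox_pathologicalFun_of_mem_cone {lam ρ : ℝ} (hlam₀ : 0 ≤ lam) (hlam : ρ < lam)
    {p q : ℝ × ℝ} (hp : p ∈ cone lam)
    (hq : ∀ w,
      proxObjective (pathologicalFun ρ) lam p q ≤ proxObjective (pathologicalFun ρ) lam p w) :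
    q = (0, lam / (1 + lam) * p.2) := by
  have h1lam : 0 < 1 + lam := by linarith
  obtain ⟨x, y⟩ := p
  obtain ⟨z, rfl⟩ : ∃ z, y = (1 + lam) * z := ⟨y / (1 + lam), by field_simp⟩
  have hx : |x| ≤ z := by simpa [cone, h1lam.ne'] using hp
  have hQ := (proxObjective_pathologicalFun_sub_ge (ρ := ρ) hlam₀ hx q).trans
    (sub_nonpos.mpr (hq (0, lam * z)))
  obtain ⟨hu, hv⟩ := eq_zero_of_quadratic_form_nonpos (a := (1 + lam - ρ) / 2) (b := 1)
    (c := (1 + lam) / 2) (s := |q.1|) (d := q.2 - lam * z) (by linarith) (by nlinarith)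
    (by linarith)
  ext
  · exact abs_eq_zero.mp hu
  · rw [sub_eq_zero.mp hv]; field_simp

lemma mk_mul_mem_cone {lam c b : ℝ} (hc : 0 ≤ c) (hcb : c ≤ b) {p : ℝ × ℝ} (hp : p ∈ cone lam) :
    (c * p.1, b * p.2) ∈ cone lam := by
  show |c * p.1| ≤ b * p.2 / (1 + lam)
  calc |c * p.1| = c * |p.1| := by rw [abs_mul, abs_of_nonneg hc]
    _ ≤ b * (p.2 / (1 + lam)) := mul_le_mul hcb hp (abs_nonneg _) (hc.trans hcb)
    _ = b * p.2 / (1 + lam) := (mul_div_assoc _ _ _).symm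

lemma iterate_apply_eq_pow_mul_of_mapsTo {T : ℝ × ℝ → ℝ × ℝ} {s : Set (ℝ × ℝ)} {c b : ℝ}
    (hT : MapsTo T s s) (hTs : ∀ p ∈ s, T p = (c * p.1, b * p.2)) {p : ℝ × ℝ} (hp : p ∈ s)
    (k : ℕ) : T^[k] p = (c ^ k * p.1, b ^ k * p.2) := by
  induction k with
  | zero => simp
  | succ k ih =>
    rw [Function.iterate_succ_apply', hTs _ (hT.iterate k hp), ih]
    ext <;> simp only [pow_succ] <;> ring

lemma tendsto_pow_mul_prod_nhds_zero {c b : ℝ} (hc₀ : 0 ≤ c) (hc₁ : c < 1) (hb₀ : 0 ≤ b)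
    (hb₁ : b < 1) (p : ℝ × ℝ) :
    Tendsto (fun k : ℕ => (c ^ k * p.1, b ^ k * p.2)) atTop (𝓝 (0, 0)) := by
  simpa using ((tendsto_pow_atTop_nhds_zero_of_lt_one hc₀ hc₁).mul_const p.1).prodMk_nhds
    ((tendsto_pow_atTop_nhds_zero_of_lt_one hb₀ hb₁).mul_const p.2)

/-- Convergence to saddles: Let `λ > ρ > 0`, let `S` be the proximal map
`prox_{(1/λ)f}` of the pathological function (characterized by the minimizing property), fix
`α ∈ (0,1]`, and set `T = (1 − α)I + αS`. Then the cone `K = {(x,y) : |x| ≤ y/(1+λ)}` is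
invariant under `T`, and for `(x,y) ∈ K` the iterates satisfy
`T^k(x,y) = ((1 − α)^k x, (1 − α(1 − λ/(1+λ)))^k y)` and converge (linearly) to the origin. -/
theorem pathological_convergence_to_saddle (lam ρ : ℝ) (hρ : 0 < ρ) (hlam : ρ < lam)
    (S : ℝ × ℝ → ℝ × ℝ)
    (hS : ∀ p w : ℝ × ℝ,
      pathologicalFun ρ (S p) + lam / 2 * (((S p).1 - p.1) ^ 2 + ((S p).2 - p.2) ^ 2) ≤
      pathologicalFun ρ w + lam / 2 * ((w.1 - p.1) ^ 2 + (w.2 - p.2) ^ 2))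
    (α : ℝ) (hα : α ∈ Set.Ioc (0 : ℝ) 1) :
    Set.MapsTo (fun p : ℝ × ℝ => (1 - α) • p + α • S p)
      {p : ℝ × ℝ | |p.1| ≤ p.2 / (1 + lam)}
      {p : ℝ × ℝ | |p.1| ≤ p.2 / (1 + lam)} ∧
    ∀ p ∈ {p : ℝ × ℝ | |p.1| ≤ p.2 / (1 + lam)},
      (∀ k : ℕ, (fun p : ℝ × ℝ => (1 - α) • p + α • S p)^[k] p =
        ((1 - α) ^ k * p.1, (1 - α * (1 - lam / (1 + lam))) ^ k * p.2)) ∧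
      Filter.Tendsto (fun k => (fun p : ℝ × ℝ => (1 - α) • p + α • S p)^[k] p)
        Filter.atTop (nhds (0, 0)) := by
  obtain ⟨hα₀, hα₁⟩ := hα
  set T := fun p : ℝ × ℝ => (1 - α) • p + α • S p
  set β := 1 - α * (1 - lam / (1 + lam))
  have hr₀ : 0 ≤ lam / (1 + lam) := div_nonneg (by linarith) (by linarith)
  have hr₁ : lam / (1 + lam) < 1 := (div_lt_one (by linarith)).2 (by linarith)
  have hc₀ : 0 ≤ 1 - α := by linarith
  have hcβ : 1 - α ≤ β := by linarith [mul_nonneg hα₀.le hr₀]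
  have hβ₁ : β < 1 := by linarith [mul_pos hα₀ (sub_pos.2 hr₁)]
  have hT : ∀ p ∈ cone lam, T p = ((1 - α) * p.1, β * p.2) := by
    intro p hp
    simp only [T, prox_pathologicalFun_of_mem_cone (hρ.trans hlam).le hlam hp (hS p)]
    ext <;> simp only [Prod.fst_add, Prod.snd_add, Prod.smul_fst, Prod.smul_snd, smul_eq_mul, β]
      <;> ring
  have hmaps : MapsTo T (cone lam) (cone lam) := fun p hp =>
    (hT p hp).symm ▸ mk_mul_mem_cone hc₀ hcβ hp
  refine ⟨hmaps, fun p hp => ⟨iterate_apply_eq_pow_mul_of_mapsTo hmaps hT hp, ?_⟩⟩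
  exact (tendsto_congr (iterate_apply_eq_pow_mul_of_mapsTo hmaps hT hp)).2
    (tendsto_pow_mul_prod_nhds_zero hc₀ (by linarith) (hc₀.trans hcβ) hβ₁ p)
end
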